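/- arXiv:2008.09265 — 10 statements merged into one kernel-verified Lean document; each statement's English description precedes it below -/
import Mathlib

section
/- Let G be a disjoint union of n vertex-disjoint triangles, and let k be the minimum positive integer with C(k,3) ≥ n. Then the sum index of G equals k. -/
open SimpleGraph Function

def edgePlus {V : Type*} (f : V → ℤ) : Sym2 V → ℤ :=
  Sym2.lift ⟨fun u v => f u + f v, fun u v => by ring⟩

def edgeMinus {V : Type*} (f : V → ℤ) : Sym2 V → ℤ :=
  Sym2.lift ⟨fun u v => |f u - f v|, fun u v => abs_sub_comm _ _⟩

/-- The sum index: the minimum, over injective vertex labelings `f : V → ℤ`,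
of the number of distinct values of `f⁺(uv) = f u + f v` on the edges. -/
noncomputable def sumIndex {V : Type*} (G : SimpleGraph V) : ℕ :=
  sInf {k | ∃ f : V → ℤ, Function.Injective f ∧ (edgePlus f '' G.edgeSet).ncard = k}

/-- The difference index: the minimum, over injective vertex labelings `f : V → ℤ`,
of the number of distinct values of `f⁻(uv) = |f u − f v|` on the edges. -/
noncomputable def diffIndex {V : Type*} (G : SimpleGraph V) : ℕ :=
  sInf {k | ∃ f : V → ℤ, Function.Injective f ∧ (edgeMinus f '' G.edgeSet).ncard = k}

/-- A disjoint union of `n` triangles: vertices `Fin n × Fin 3`, two distinct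
vertices adjacent iff they lie in the same triangle. -/
def disjointTriangles (n : ℕ) : SimpleGraph (Fin n × Fin 3) :=
  SimpleGraph.fromRel (fun p q => p.1 = q.1)

/-!
Lower bound: in an injective labelling the three edge sums of a triangle are distinct, and they
determine the triangle's labels (each label is half the total of the three sums minus the opposite
sum). So the triangles give `n` distinct `3`-subsets of the set of edge sums.

Upper bound: pick `n` distinct `3`-subsets `A ⊆ {0, …, k - 1}` and label the vertex of triangle `A`
belonging to `x ∈ A` by `∑ t ∈ A, 6 ^ t - 2 * 6 ^ x`. The edge opposite to `z ∈ A` then gets the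
sum `2 * 6 ^ z`, and uniqueness of base-`6` expansions makes the labelling injective.
-/

open Finset

lemma sumIndex_le {V : Type*} (G : SimpleGraph V) {f : V → ℤ} (hf : Injective f) :
    sumIndex G ≤ (edgePlus f '' G.edgeSet).ncard :=
  Nat.sInf_le ⟨f, hf, rfl⟩

lemma exists_ncard_edgePlus_eq_sumIndex {V : Type*} [Countable V] (G : SimpleGraph V) :
    ∃ f : V → ℤ, Injective f ∧ (edgePlus f '' G.edgeSet).ncard = sumIndex G := by
  obtain ⟨f, hf⟩ := Countable.exists_injective_nat V
  exact Nat.sInf_mem (s := {k | ∃ f : V → ℤ, Injective f ∧ (edgePlus f '' G.edgeSet).ncard = k})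
    ⟨_, _, Nat.cast_injective.comp hf, rfl⟩

lemma disjointTriangles_adj {n : ℕ} {p q : Fin n × Fin 3} :
    (disjointTriangles n).Adj p q ↔ p ≠ q ∧ p.1 = q.1 := by
  simp [disjointTriangles, eq_comm]

def pairSums (x : Fin 3 → ℤ) : Finset ℤ := {x 0 + x 1, x 0 + x 2, x 1 + x 2}

lemma card_pairSums {x : Fin 3 → ℤ} (hx : Injective x) : #(pairSums x) = 3 := by
  have h01 := hx.ne (show (0 : Fin 3) ≠ 1 by decide)
  have h02 := hx.ne (show (0 : Fin 3) ≠ 2 by decide)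
  have h12 := hx.ne (show (1 : Fin 3) ≠ 2 by decide)
  exact card_eq_three.mpr ⟨_, _, _, by omega, by omega, by omega, rfl⟩

lemma exists_eq_of_pairSums_eq {x y : Fin 3 → ℤ} (hy : Injective y)
    (h : pairSums x = pairSums y) : ∃ j, x 0 = y j := by
  have hmem : ∀ s ∈ pairSums x, s ∈ pairSums y := fun s hs => h ▸ hs
  have hmem' : ∀ s ∈ pairSums y, s ∈ pairSums x := fun s hs => h ▸ hs
  simp only [pairSums, mem_insert, mem_singleton, forall_eq_or_imp, forall_eq] at hmem hmem'
  have h01 := hy.ne (show (0 : Fin 3) ≠ 1 by decide)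
  have h02 := hy.ne (show (0 : Fin 3) ≠ 2 by decide)
  have h12 := hy.ne (show (1 : Fin 3) ≠ 2 by decide)
  have : x 0 = y 0 ∨ x 0 = y 1 ∨ x 0 = y 2 := by omega
  rcases this with h | h | h <;> exact ⟨_, h⟩

lemma choose_three_le_ncard_edgePlus (n : ℕ) {g : Fin n × Fin 3 → ℤ} (hg : Injective g) :
    n ≤ (edgePlus g '' (disjointTriangles n).edgeSet).ncard.choose 3 := by
  set S := edgePlus g '' (disjointTriangles n).edgeSet
  have hS : S.Finite := (Set.toFinite _).image _
  have hrow : ∀ i, Injective fun j => g (i, j) := fun i j j' h => (Prod.ext_iff.mp (hg h)).2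
  have hsub : ∀ i, pairSums (fun j => g (i, j)) ⊆ hS.toFinset := by
    intro i s hs
    have hedge : ∀ j j' : Fin 3, j ≠ j' → g (i, j) + g (i, j') ∈ hS.toFinset := fun j j' hjj' =>
      hS.mem_toFinset.mpr ⟨s((i, j), (i, j')), by simp [disjointTriangles_adj, hjj'], rfl⟩
    simp only [pairSums, mem_insert, mem_singleton] at hs
    rcases hs with rfl | rfl | rfl <;> exact hedge _ _ (by decide)
  have hinj : ∀ i i', pairSums (fun j => g (i, j)) = pairSums (fun j => g (i', j)) → i = i' := by
    intro i i' h
    obtain ⟨j, hj⟩ := exists_eq_of_pairSums_eq (hrow i') h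
    exact (Prod.ext_iff.mp (hg hj)).1
  calc n = #(univ : Finset (Fin n)) := (card_fin n).symm
    _ ≤ #(hS.toFinset.powersetCard 3) :=
        card_le_card_of_injOn _ (fun i _ => mem_powersetCard.mpr ⟨hsub i, card_pairSums (hrow i)⟩)
          fun i _ i' _ h => hinj i i' h
    _ = S.ncard.choose 3 := by rw [card_powersetCard, Set.ncard_eq_toFinset_card S hS]

namespace Multiset

lemma sum_map_pow_lt {b M : ℕ} {t : Multiset ℕ} (ht : card t < b) (hlt : ∀ x ∈ t, x < M) :
    (t.map (b ^ ·)).sum < b ^ M := by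
  cases M with
  | zero =>
    rw [eq_zero_of_forall_notMem fun x hx => Nat.not_lt_zero x (hlt x hx)]
    simp
  | succ M =>
    have hle : ∀ y ∈ t.map (b ^ ·), y ≤ b ^ M := by
      simp only [mem_map, forall_exists_index, and_imp, forall_apply_eq_imp_iff₂]
      exact fun x hx => Nat.pow_le_pow_right (by omega) (Nat.le_of_lt_succ (hlt x hx))
    calc (t.map (b ^ ·)).sum ≤ card t * b ^ M := by
          simpa using sum_le_card_nsmul _ _ hle
      _ < b * b ^ M := Nat.mul_lt_mul_of_pos_right ht (Nat.pow_pos (by omega))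
      _ = b ^ (M + 1) := by ring

lemma mem_of_sum_map_pow_eq {b M : ℕ} {s t : Multiset ℕ} (ht : card t < b) (hMs : M ∈ s)
    (hMt : ∀ x ∈ t, x ≤ M) (h : (s.map (b ^ ·)).sum = (t.map (b ^ ·)).sum) : M ∈ t := by
  by_contra hM
  have hlt := sum_map_pow_lt ht fun x hx => lt_of_le_of_ne (hMt x hx) (ne_of_mem_of_not_mem hx hM)
  have := le_sum_of_mem (mem_map_of_mem (b ^ ·) hMs)
  omega

/-- Base-`b` expansions are unique when every digit is below `b`. -/
theorem eq_of_sum_map_pow_eq {b : ℕ} {s t : Multiset ℕ} (hs : card s < b) (ht : card t < b)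
    (h : (s.map (b ^ ·)).sum = (t.map (b ^ ·)).sum) : s = t := by
  induction s using strongInductionOn generalizing t with
  | ih s ih =>
  rcases eq_or_ne (s + t) 0 with hst | hst
  · rw [add_eq_zero] at hst
    rw [hst.1, hst.2]
  obtain ⟨M, hM, hmax⟩ := exists_max_image id hst
  have hmax' : ∀ x ∈ s + t, x ≤ M := hmax
  have hMs : M ∈ s := by
    rcases mem_add.mp hM with hMs | hMt
    · exact hMs
    · exact mem_of_sum_map_pow_eq hs hMt (fun x hx => hmax' x (mem_add.mpr (.inl hx))) h.symm
  have hMt : M ∈ t := mem_of_sum_map_pow_eq ht hMs (fun x hx => hmax' x (mem_add.mpr (.inr hx))) h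
  rw [← cons_erase hMs, ← cons_erase hMt] at h ⊢
  simp only [map_cons, sum_cons, Nat.add_left_cancel_iff] at h
  rw [ih _ (erase_lt.mpr hMs) ((card_erase_le).trans_lt hs) ((card_erase_le).trans_lt ht) h]

end Multiset

def powLabel (b : ℕ) (A : Finset ℕ) (x : ℕ) : ℤ :=
  ∑ t ∈ A, (b : ℤ) ^ t - 2 * (b : ℤ) ^ x

theorem powLabel_injective {b : ℕ} {A A' : Finset ℕ} {x x' : ℕ} (hA : #A + 2 < b)
    (hA' : #A' + 2 < b) (h : powLabel b A x = powLabel b A' x') : A = A' ∧ x = x' := by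
  have hN : ∑ t ∈ A, b ^ t + 2 * b ^ x' = ∑ t ∈ A', b ^ t + 2 * b ^ x := by
    unfold powLabel at h
    have : ((∑ t ∈ A, b ^ t + 2 * b ^ x' : ℕ) : ℤ) = ((∑ t ∈ A', b ^ t + 2 * b ^ x : ℕ) : ℤ) := by
      push_cast; linarith
    exact_mod_cast this
  have hM : A.val + {x', x'} = A'.val + {x, x} :=
    Multiset.eq_of_sum_map_pow_eq (by simpa using hA) (by simpa using hA') (by
      simp only [Multiset.map_add, Multiset.sum_add, ← Finset.sum_eq_multiset_sum]
      simpa [two_mul] using hN)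
  have hxx' : x = x' := by
    by_contra hne
    have := congrArg (Multiset.count x) hM
    simp only [Multiset.count_add, Multiset.insert_eq_cons, Multiset.count_cons,
      Multiset.count_singleton, hne, if_false, if_true] at this
    have := Multiset.nodup_iff_count_le_one.mp A.nodup x
    omega
  subst hxx'
  exact ⟨Finset.val_injective (add_right_cancel hM), rfl⟩

theorem exists_powLabel_add_powLabel (b : ℕ) {A : Finset ℕ} (hA : #A = 3) {x y : ℕ}
    (hx : x ∈ A) (hy : y ∈ A) (hxy : x ≠ y) :
    ∃ z ∈ A, powLabel b A x + powLabel b A y = 2 * (b : ℤ) ^ z := by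
  obtain ⟨z, hz⟩ := card_eq_one.mp (show #((A.erase x).erase y) = 1 by
    rw [card_erase_of_mem (mem_erase.mpr ⟨hxy.symm, hy⟩), card_erase_of_mem hx, hA])
  have hzA : z ∈ A := mem_of_mem_erase (mem_of_mem_erase (hz ▸ mem_singleton_self z))
  refine ⟨z, hzA, ?_⟩
  have hsum : ∑ t ∈ A, (b : ℤ) ^ t = b ^ x + b ^ y + b ^ z := by
    rw [← add_sum_erase A _ hx, ← add_sum_erase _ _ (mem_erase.mpr ⟨hxy.symm, hy⟩), hz,
      sum_singleton, add_assoc]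
  simp only [powLabel, hsum]
  ring

lemma exists_injective_powersetCard_three {n k : ℕ} (hkn : n ≤ k.choose 3) :
    ∃ A : Fin n → Finset ℕ, Injective A ∧ ∀ i, A i ∈ (range k).powersetCard 3 := by
  have hcard : Fintype.card (Fin n) ≤ Fintype.card ((range k).powersetCard 3) := by simpa using hkn
  obtain ⟨e⟩ := Function.Embedding.nonempty_of_card_le hcard
  exact ⟨fun i => e i, fun i j h => e.injective (Subtype.ext h), fun i => (e i).2⟩

lemma exists_injective_ncard_edgePlus_le {n k : ℕ} (hkn : n ≤ k.choose 3) :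
    ∃ f : Fin n × Fin 3 → ℤ, Injective f ∧
      (edgePlus f '' (disjointTriangles n).edgeSet).ncard ≤ k := by
  obtain ⟨A, hAinj, hA⟩ := exists_injective_powersetCard_three hkn
  simp only [mem_powersetCard] at hA
  let f : Fin n × Fin 3 → ℤ := fun p =>
    powLabel 6 (A p.1) ((A p.1).orderEmbOfFin (hA p.1).2 p.2)
  refine ⟨f, ?_, ?_⟩
  · rintro ⟨i, j⟩ ⟨i', j'⟩ h
    obtain ⟨hii', hjj'⟩ :=
      powLabel_injective (by rw [(hA i).2]; norm_num) (by rw [(hA i').2]; norm_num) h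
    obtain rfl : i = i' := hAinj hii'
    exact congrArg _ (((A i).orderEmbOfFin (hA i).2).injective hjj')
  · have hsub : edgePlus f '' (disjointTriangles n).edgeSet ⊆
        ((range k).image fun z => 2 * (6 : ℤ) ^ z : Finset ℤ) := by
      rintro _ ⟨e, he, rfl⟩
      induction e using Sym2.ind with
      | _ p q =>
        obtain ⟨hpq, hpq1⟩ := disjointTriangles_adj.mp he
        obtain ⟨i, j⟩ := p
        obtain ⟨i', j'⟩ := q
        obtain rfl : i = i' := hpq1
        have hjj' : j ≠ j' := fun h => hpq (by rw [h])
        obtain ⟨z, hz, hsum⟩ := exists_powLabel_add_powLabel 6 (hA i).2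
          ((A i).orderEmbOfFin_mem _ j) ((A i).orderEmbOfFin_mem _ j')
          (((A i).orderEmbOfFin (hA i).2).injective.ne hjj')
        exact mem_coe.mpr (mem_image.mpr ⟨z, (hA i).1 hz, hsum.symm⟩)
    calc (edgePlus f '' (disjointTriangles n).edgeSet).ncard
        ≤ #((range k).image fun z => 2 * (6 : ℤ) ^ z) := by
          simpa only [Set.ncard_coe_finset] using Set.ncard_le_ncard hsub (finite_toSet _)
      _ ≤ k := card_image_le.trans (card_range k).le

lemma sumIndex_disjointTriangles_le {n k : ℕ} (hkn : n ≤ k.choose 3) :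
    sumIndex (disjointTriangles n) ≤ k := by
  obtain ⟨f, hf, hfk⟩ := exists_injective_ncard_edgePlus_le hkn
  exact (sumIndex_le _ hf).trans hfk

lemma le_choose_sumIndex_disjointTriangles (n : ℕ) :
    n ≤ (sumIndex (disjointTriangles n)).choose 3 := by
  obtain ⟨g, hg, hgs⟩ := exists_ncard_edgePlus_eq_sumIndex (disjointTriangles n)
  exact hgs ▸ choose_three_le_ncard_edgePlus n hg

theorem stmt3_general (n k : ℕ) (hn : 1 ≤ n) (hkn : n ≤ k.choose 3)
    (hmin : ∀ k', 0 < k' → n ≤ k'.choose 3 → k ≤ k') :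
    sumIndex (disjointTriangles n) = k := by
  have hchoose := le_choose_sumIndex_disjointTriangles n
  have hpos : 0 < sumIndex (disjointTriangles n) :=
    Nat.pos_of_ne_zero fun h => by rw [h] at hchoose; simp at hchoose; omega
  exact le_antisymm (sumIndex_disjointTriangles_le hkn) (hmin _ hpos hchoose)

theorem stmt3 (n k : ℕ) (hn : 1 ≤ n) (hk : 0 < k) (hkn : n ≤ k.choose 3)
    (hmin : ∀ k', 0 < k' → n ≤ k'.choose 3 → k ≤ k') :
    sumIndex (disjointTriangles n) = k :=
  stmt3_general n k hn hkn hmin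
end

section
/- For every integer n ≥ 3, the sum index of the cycle C_n equals 3. -/
/-!
With an injective labeling, two edges sharing a vertex have different sums. If the edge sums
of `C_n` took only two values, they would therefore alternate around the cycle. For odd `n` this
is impossible outright; for even `n` the labels at the even positions would form an arithmetic
progression that returns to its start after `n / 2` steps, so it is constant, contradicting
injectivity. Conversely, the labeling `0, 1, -1, 2, -2, …` has consecutive sums alternating
between `1` and `0`, and only the edge closing the cycle contributes a third value.
-/

open SimpleGraph Function

open scoped Fin.NatCast

theorem cycleGraph_edgeSet (n : ℕ) :
    (cycleGraph (n + 2)).edgeSet = Set.range fun v => s(v, v + 1) := by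
  ext e
  induction e using Sym2.ind with
  | _ u v =>
    simp only [mem_edgeSet, cycleGraph_adj, Set.mem_range, Sym2.eq_iff]
    constructor
    · rintro (h | h)
      · exact ⟨v, Or.inr ⟨rfl, by rw [← h, add_sub_cancel]⟩⟩
      · exact ⟨u, Or.inl ⟨rfl, by rw [← h, add_sub_cancel]⟩⟩
    · rintro ⟨w, ⟨rfl, rfl⟩ | ⟨rfl, rfl⟩⟩ <;> simp

theorem edgePlus_image_edgeSet_cycleGraph {n : ℕ} (f : Fin (n + 2) → ℤ) :
    edgePlus f '' (cycleGraph (n + 2)).edgeSet = Set.range fun v => f v + f (v + 1) := by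
  rw [cycleGraph_edgeSet, ← Set.range_comp]
  rfl

theorem Set.ncard_triple_le {α : Type*} (a b c : α) : ({a, b, c} : Set α).ncard ≤ 3 :=
  (ncard_insert_le a _).trans <| Nat.succ_le_succ <|
    (ncard_insert_le b _).trans <| Nat.succ_le_succ (ncard_singleton c).le

def adjSum (g : ℕ → ℤ) (k : ℕ) : ℤ := g k + g (k + 1)

section AdjSum

variable {g : ℕ → ℤ} {n : ℕ}

theorem adjSum_succ_sub_adjSum (g : ℕ → ℤ) (k : ℕ) :
    adjSum g (k + 1) - adjSum g k = g (k + 2) - g k := by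
  unfold adjSum
  ring

theorem adjSum_succ_ne (hg : ∀ k, g (k + 2) ≠ g k) (k : ℕ) : adjSum g (k + 1) ≠ adjSum g k :=
  fun h => hg k (by linarith [adjSum_succ_sub_adjSum g k])

theorem Function.Periodic.adjSum (h : Periodic g n) : Periodic (adjSum g) n := fun k => by
  simp only [_root_.adjSum, add_right_comm k n 1, h k, h (k + 1)]

theorem periodic_two_of_mem_pair {s : ℕ → ℤ} {a b : ℤ} (hs : ∀ k, s k ∈ ({a, b} : Set ℤ))
    (hne : ∀ k, s (k + 1) ≠ s k) : Periodic s 2 := fun k => by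
  have h0 := hs k
  have h2 := hs (k + 2)
  have := hne k
  have := hne (k + 1)
  simp only [Set.mem_insert_iff, Set.mem_singleton_iff] at h0 h2
  grind

theorem exists_adjSum_notMem_pair (hper : Periodic g n) (hn : n ≠ 0)
    (hg : ∀ k, g (k + 2) ≠ g k) (a b : ℤ) : ∃ k, adjSum g k ∉ ({a, b} : Set ℤ) := by
  by_contra! hs
  have hne := adjSum_succ_ne hg
  have h2 := periodic_two_of_mem_pair hs hne
  obtain ⟨m, rfl | rfl⟩ := Nat.even_or_odd' n
  · have hm : (m : ℤ) ≠ 0 := by exact_mod_cast (by omega : m ≠ 0)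
    have hprog (j : ℕ) : g (2 * j) = g 0 + j * (adjSum g 1 - adjSum g 0) := by
      induction j with
      | zero => simp
      | succ j ih =>
        have heven : adjSum g (2 * j) = adjSum g 0 := by simpa [mul_comm] using h2.nat_mul_eq j
        have hodd : adjSum g (2 * j + 1) = adjSum g 1 := by
          simpa [mul_comm, add_comm] using (h2.nat_mul j) 1
        have hstep := adjSum_succ_sub_adjSum g (2 * j)
        rw [heven, hodd] at hstep
        rw [mul_add_one]
        push_cast
        linarith
    have hd : adjSum g 1 - adjSum g 0 = 0 := by
      have := hprog m
      rw [hper.eq] at this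
      exact (mul_eq_zero.mp (by linarith : (m : ℤ) * _ = 0)).resolve_left hm
    exact hne 0 (by linarith)
  · have h1 : adjSum g (1 + m * 2) = adjSum g 1 := (h2.nat_mul m) 1
    rw [add_comm, mul_comm, hper.adjSum.eq] at h1
    exact hne 0 h1.symm

end AdjSum

theorem three_le_ncard_range_add_succ {n : ℕ} {f : Fin (n + 3) → ℤ} (hf : Injective f) :
    3 ≤ (Set.range fun v => f v + f (v + 1)).ncard := by
  set g : ℕ → ℤ := fun k => f k
  have hper : Periodic g (n + 3) := fun k => by simp [g]
  have hg (k : ℕ) : g (k + 2) ≠ g k := fun h => by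
    have h2 : ((2 : ℕ) : Fin (n + 3)) = 0 := by
      simpa using hf h
    have := Nat.le_of_dvd two_pos (Fin.natCast_eq_zero.mp h2)
    omega
  have hmem (k : ℕ) : adjSum g k ∈ Set.range fun v => f v + f (v + 1) := ⟨k, by simp [adjSum, g]⟩
  obtain ⟨k, hk⟩ := exists_adjSum_notMem_pair hper (by omega) hg (adjSum g 0) (adjSum g 1)
  simp only [Set.mem_insert_iff, Set.mem_singleton_iff, not_or] at hk
  calc 3 = ({adjSum g 0, adjSum g 1, adjSum g k} : Set ℤ).ncard :=
        (Set.ncard_eq_three.mpr ⟨_, _, _, (adjSum_succ_ne hg 0).symm, Ne.symm hk.1,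
          Ne.symm hk.2, rfl⟩).symm
    _ ≤ _ := Set.ncard_le_ncard (by simp [Set.insert_subset_iff, hmem]) (Set.finite_range _)

def zigzag (k : ℕ) : ℤ := if k % 2 = 0 then -(k / 2 : ℕ) else (k / 2 : ℕ) + 1

theorem zigzag_injective : Injective zigzag := fun a b h => by
  unfold zigzag at h
  split_ifs at h <;> omega

theorem zigzag_add_zigzag_succ (k : ℕ) : zigzag k + zigzag (k + 1) ∈ ({0, 1} : Set ℤ) := by
  unfold zigzag
  split_ifs <;> simp <;> omega

theorem range_add_succ_zigzag_subset (n : ℕ) :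
    (Set.range fun v : Fin (n + 1) => zigzag v + zigzag ↑(v + 1)) ⊆ {zigzag n, 0, 1} := by
  rintro _ ⟨v, rfl⟩
  dsimp only
  by_cases hv : v = Fin.last n
  · subst hv
    simp [Fin.last_add_one, zigzag]
  · rw [Fin.val_add_one_of_lt (lt_of_le_of_ne (Fin.le_last v) hv)]
    exact Or.inr (zigzag_add_zigzag_succ v)

theorem stmt4 (n : ℕ) (hn : 3 ≤ n) : sumIndex (SimpleGraph.cycleGraph n) = 3 := by
  obtain ⟨m, rfl⟩ : ∃ m, n = m + 3 := ⟨n - 3, by omega⟩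
  have hzigzag : Injective (zigzag ∘ Fin.val : Fin (m + 3) → ℤ) :=
    zigzag_injective.comp Fin.val_injective
  refine IsLeast.csInf_eq ⟨⟨_, hzigzag, ?_⟩, ?_⟩
  · rw [edgePlus_image_edgeSet_cycleGraph]
    refine le_antisymm ?_ (three_le_ncard_range_add_succ hzigzag)
    exact (Set.ncard_le_ncard (range_add_succ_zigzag_subset (m + 2)) (Set.toFinite _)).trans
      (Set.ncard_triple_le _ _ _)
  · rintro k ⟨f, hf, rfl⟩
    rw [edgePlus_image_edgeSet_cycleGraph]
    exact three_le_ncard_range_add_succ hf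
end

section
/- For every spider graph S with Δ ≥ 3 legs, the sum index of S equals Δ. -/
open SimpleGraph Function

/-- A spider: a center vertex `none` together with `Δ` internally disjoint legs,
the `i`-th leg being a path on the vertices `some ⟨i, 0⟩, some ⟨i, 1⟩, …, some ⟨i, ℓ i − 1⟩`
attached to the center at `some ⟨i, 0⟩`. -/
def spider (Δ : ℕ) (ℓ : Fin Δ → ℕ) : SimpleGraph (Option (Σ i : Fin Δ, Fin (ℓ i))) :=
  SimpleGraph.fromRel (fun a b =>
    (∃ (i : Fin Δ) (j : Fin (ℓ i)), a = none ∧ b = some ⟨i, j⟩ ∧ (j : ℕ) = 0) ∨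
    (∃ (i : Fin Δ) (j j' : Fin (ℓ i)), a = some ⟨i, j⟩ ∧ b = some ⟨i, j'⟩ ∧
      (j' : ℕ) = (j : ℕ) + 1))

/-!
The centre has degree `Δ`, and an injective labelling gives its `Δ` edges pairwise distinct
sums, so `s(S) ≥ Δ`. Conversely, label in `ℤ^Δ`: the centre gets `0`, and leg `i` is labelled so
that its edge sums alternate between the unit vectors `eᵢ` and `e_{i+1}` (indices mod `Δ`).
For `Δ ≥ 3` these labels are pairwise distinct, and an additive map `ℤ^Δ → ℤ` that is injective
on the finitely many labels (`v ↦ ∑ vₜ Bᵗ` for a large base `B`) turns them into an injective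
integer labelling with at most `Δ` edge sums.
-/

section EdgeSums

variable {V : Type*} {G : SimpleGraph V}

lemma ncard_edgePlus_image_le_card {f : V → ℤ} {T : Finset ℤ}
    (hT : ∀ u v, G.Adj u v → f u + f v ∈ T) : (edgePlus f '' G.edgeSet).ncard ≤ T.card := by
  rw [← Set.ncard_coe_finset T]
  refine Set.ncard_le_ncard ?_ T.finite_toSet
  rintro _ ⟨e, he, rfl⟩
  induction e using Sym2.ind with
  | _ u v => exact hT u v he

lemma ncard_neighborSet_le_ncard_edgePlus_image [Finite V] {f : V → ℤ} (hf : Injective f)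
    (v : V) : (G.neighborSet v).ncard ≤ (edgePlus f '' G.edgeSet).ncard :=
  Set.ncard_le_ncard_of_injOn (fun w => f v + f w)
    (fun w hw => ⟨s(v, w), hw, rfl⟩)
    (fun _ _ _ _ h => hf (add_left_cancel h))
    ((Set.toFinite G.edgeSet).image _)

lemma sumIndex_eq_of_forall_le {k : ℕ}
    (hle : ∀ f : V → ℤ, Injective f → k ≤ (edgePlus f '' G.edgeSet).ncard)
    {f : V → ℤ} (hf : Injective f) (hk : (edgePlus f '' G.edgeSet).ncard ≤ k) :
    sumIndex G = k := by
  have hmem : (edgePlus f '' G.edgeSet).ncard ∈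
      {k | ∃ f : V → ℤ, Injective f ∧ (edgePlus f '' G.edgeSet).ncard = k} := ⟨f, hf, rfl⟩
  refine le_antisymm ((Nat.sInf_le hmem).trans hk) (le_csInf ⟨_, hmem⟩ ?_)
  rintro _ ⟨g, hg, rfl⟩
  exact hle g hg

end EdgeSums

section SignedDigits

lemma eq_zero_of_sum_mul_pow_eq_zero {B : ℤ} :
    ∀ {n : ℕ} {e : Fin n → ℤ}, (∀ t, |e t| < B) → ∑ t, e t * B ^ (t : ℕ) = 0 → e = 0
  | 0, e, _, _ => Subsingleton.elim _ _
  | n + 1, e, he, h => by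
    have hsplit : ∑ t, e t * B ^ (t : ℕ) = e 0 + B * ∑ t : Fin n, e t.succ * B ^ (t : ℕ) := by
      rw [Fin.sum_univ_succ, Finset.mul_sum]
      simp [pow_succ, mul_comm, mul_left_comm]
    rw [hsplit] at h
    have h0 : e 0 = 0 :=
      Int.eq_zero_of_abs_lt_dvd (⟨-∑ t : Fin n, e t.succ * B ^ (t : ℕ), by linarith⟩ : B ∣ e 0)
        (he 0)
    have hB : B ≠ 0 := (lt_of_le_of_lt (abs_nonneg _) (he 0)).ne'
    have htail : (fun t : Fin n => e t.succ) = 0 :=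
      eq_zero_of_sum_mul_pow_eq_zero (fun t => he t.succ)
        (by simpa [h0, hB] using h)
    funext t
    exact Fin.cases h0 (fun t => congrFun htail t) t

def sumMulPow (B : ℤ) (n : ℕ) : (Fin n → ℤ) →+ ℤ :=
  AddMonoidHom.mk' (fun v => ∑ t, v t * B ^ (t : ℕ))
    (fun v w => by simp only [Pi.add_apply, add_mul, Finset.sum_add_distrib])

lemma sumMulPow_injOn {B : ℤ} {n : ℕ} :
    Set.InjOn (sumMulPow B n) {v | ∀ t, 2 * |v t| < B} := by
  intro v hv w hw h
  rw [← sub_eq_zero, ← map_sub] at h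
  refine sub_eq_zero.mp (eq_zero_of_sum_mul_pow_eq_zero (fun t => ?_) h)
  rw [Pi.sub_apply]
  linarith [hv t, hw t, abs_sub (v t) (w t)]

lemma exists_addMonoidHom_injOn {n : ℕ} {S : Set (Fin n → ℤ)} (hS : S.Finite) :
    ∃ φ : (Fin n → ℤ) →+ ℤ, Set.InjOn φ S := by
  obtain ⟨M, hM⟩ := (hS.image fun v => ∑ t, |v t|).bddAbove
  refine ⟨sumMulPow (2 * M + 1) n, sumMulPow_injOn.mono ?_⟩
  intro v hv t
  have : |v t| ≤ ∑ t, |v t| :=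
    Finset.single_le_sum (fun t _ => abs_nonneg (v t)) (Finset.mem_univ t)
  linarith [hM ⟨v, hv, rfl⟩]

end SignedDigits

lemma finRotate_ne_self {n : ℕ} (hn : 2 ≤ n) (i : Fin n) : finRotate n i ≠ i := by
  obtain ⟨m, rfl⟩ : ∃ m, n = m + 1 := ⟨n - 1, by omega⟩
  simp only [ne_eq, Fin.ext_iff, coe_finRotate, Fin.val_last]
  split_ifs <;> omega

lemma finRotate_finRotate_ne_self {n : ℕ} (hn : 3 ≤ n) (i : Fin n) :
    finRotate n (finRotate n i) ≠ i := by
  obtain ⟨m, rfl⟩ : ∃ m, n = m + 1 := ⟨n - 1, by omega⟩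
  simp only [ne_eq, Fin.ext_iff, coe_finRotate, Fin.val_last]
  split_ifs <;> omega

section AlternatingPath

/-- Labelling a path `0, x₀, x₁, …` so that consecutive sums alternate `x, y, x, y, …` forces
`xⱼ = altPathCoeff₁ j • x + altPathCoeff₂ j • y`. -/
def altPathCoeff₁ (j : ℕ) : ℤ := if j % 2 = 0 then (j : ℤ) / 2 + 1 else -(((j : ℤ) + 1) / 2)

def altPathCoeff₂ (j : ℕ) : ℤ := if j % 2 = 0 then -((j : ℤ) / 2) else ((j : ℤ) + 1) / 2

lemma altPathCoeff₁_ne_zero (j : ℕ) : altPathCoeff₁ j ≠ 0 := by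
  unfold altPathCoeff₁; split_ifs <;> omega

lemma altPathCoeff₁_injective : Injective altPathCoeff₁ := by
  intro j k h
  unfold altPathCoeff₁ at h; split_ifs at h <;> omega

variable {A : Type*} [AddCommGroup A]

def altPathLabel (x y : A) (j : ℕ) : A := altPathCoeff₁ j • x + altPathCoeff₂ j • y

lemma altPathLabel_zero (x y : A) : altPathLabel x y 0 = x := by
  simp [altPathLabel, altPathCoeff₁, altPathCoeff₂]

lemma altPathLabel_add_succ (x y : A) (j : ℕ) :
    altPathLabel x y j + altPathLabel x y (j + 1) = if j % 2 = 0 then y else x := by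
  have h₁ : altPathCoeff₁ j + altPathCoeff₁ (j + 1) = if j % 2 = 0 then 0 else 1 := by
    unfold altPathCoeff₁; split_ifs <;> omega
  have h₂ : altPathCoeff₂ j + altPathCoeff₂ (j + 1) = if j % 2 = 0 then 1 else 0 := by
    unfold altPathCoeff₂; split_ifs <;> omega
  unfold altPathLabel
  split_ifs at h₁ h₂ ⊢ <;> linear_combination (norm := module) h₁ • x + h₂ • y

end AlternatingPath

section Spider

variable {Δ : ℕ} {ℓ : Fin Δ → ℕ}

lemma spider_adj_none_some (i : Fin Δ) (hℓ : 1 ≤ ℓ i) :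
    (spider Δ ℓ).Adj none (some ⟨i, ⟨0, hℓ⟩⟩) :=
  (fromRel_adj _ _ _).2 ⟨by simp, Or.inl (Or.inl ⟨i, ⟨0, hℓ⟩, rfl, rfl, rfl⟩)⟩

lemma le_ncard_neighborSet_spider (hℓ : ∀ i, 1 ≤ ℓ i) :
    Δ ≤ ((spider Δ ℓ).neighborSet none).ncard := by
  have hinj : Injective fun i : Fin Δ => (some ⟨i, ⟨0, hℓ i⟩⟩ : Option (Σ i, Fin (ℓ i))) :=
    fun i i' h => (Sigma.mk.inj_iff.1 (Option.some.inj h)).1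
  calc Δ = (Set.range _).ncard := by
        rw [Set.ncard_range_of_injective hinj, Nat.card_eq_fintype_card, Fintype.card_fin]
    _ ≤ _ := Set.ncard_le_ncard (Set.range_subset_iff.2 fun i => spider_adj_none_some i (hℓ i))

def spiderLabel (ℓ : Fin Δ → ℕ) : Option (Σ i : Fin Δ, Fin (ℓ i)) → Fin Δ → ℤ
  | none => 0
  | some ⟨i, j⟩ => altPathLabel (Pi.single i 1) (Pi.single (finRotate Δ i) 1) j

lemma spiderLabel_some_apply_self (hΔ : 2 ≤ Δ) (i : Fin Δ) (j : Fin (ℓ i)) :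
    spiderLabel ℓ (some ⟨i, j⟩) i = altPathCoeff₁ j := by
  simp only [spiderLabel, altPathLabel, Pi.add_apply, Pi.smul_apply, Pi.single_eq_same,
    Pi.single_eq_of_ne (finRotate_ne_self hΔ i).symm, smul_eq_mul, mul_one, mul_zero, add_zero]

lemma spiderLabel_some_apply_of_ne {i t : Fin Δ} (j : Fin (ℓ i)) (hi : t ≠ i)
    (hi' : t ≠ finRotate Δ i) : spiderLabel ℓ (some ⟨i, j⟩) t = 0 := by
  simp only [spiderLabel, altPathLabel, Pi.add_apply, Pi.smul_apply, Pi.single_eq_of_ne hi,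
    Pi.single_eq_of_ne hi', smul_zero, add_zero]

lemma spiderLabel_injective (hΔ : 3 ≤ Δ) : Injective (spiderLabel ℓ) := by
  have hself (i : Fin Δ) (j : Fin (ℓ i)) : spiderLabel ℓ (some ⟨i, j⟩) i ≠ 0 := by
    rw [spiderLabel_some_apply_self (by omega)]
    exact altPathCoeff₁_ne_zero j
  have hsupp {i i' : Fin Δ} (j' : Fin (ℓ i')) (hne : i ≠ i')
      (h : spiderLabel ℓ (some ⟨i', j'⟩) i ≠ 0) : i = finRotate Δ i' :=
    by_contra fun h' => h (spiderLabel_some_apply_of_ne j' hne h')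
  rintro (_ | ⟨i, j⟩) (_ | ⟨i', j'⟩) h
  · rfl
  · exact absurd (congrFun h i').symm (hself i' j')
  · exact absurd (congrFun h i) (hself i j)
  · by_cases hii : i = i'
    · subst hii
      have hcoeff := congrFun h i
      rw [spiderLabel_some_apply_self (by omega), spiderLabel_some_apply_self (by omega)] at hcoeff
      rw [Fin.ext (altPathCoeff₁_injective hcoeff)]
    · have h₁ := hsupp j' hii (h ▸ hself i j)
      have h₂ := hsupp j (Ne.symm hii) (h ▸ hself i' j')
      exact absurd (by rw [← h₂, ← h₁]) (finRotate_finRotate_ne_self hΔ i)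

lemma spiderLabel_add_mem_range {u v : Option (Σ i : Fin Δ, Fin (ℓ i))}
    (h : (spider Δ ℓ).Adj u v) :
    spiderLabel ℓ u + spiderLabel ℓ v ∈ Set.range fun t : Fin Δ => Pi.single t (1 : ℤ) := by
  have center (i : Fin Δ) (j : Fin (ℓ i)) (hj : (j : ℕ) = 0) :
      spiderLabel ℓ none + spiderLabel ℓ (some ⟨i, j⟩) ∈ Set.range fun t => Pi.single t 1 :=
    ⟨i, by simp [spiderLabel, hj, altPathLabel_zero]⟩
  have step (i : Fin Δ) (j j' : Fin (ℓ i)) (hj : (j' : ℕ) = j + 1) :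
      spiderLabel ℓ (some ⟨i, j⟩) + spiderLabel ℓ (some ⟨i, j'⟩) ∈
        Set.range fun t => Pi.single t 1 := by
    simp only [spiderLabel, hj, altPathLabel_add_succ]
    split_ifs <;> exact Set.mem_range_self _
  rw [spider, fromRel_adj] at h
  rcases h with ⟨-, (⟨i, j, rfl, rfl, hj⟩ | ⟨i, j, j', rfl, rfl, hj⟩) |
    (⟨i, j, rfl, rfl, hj⟩ | ⟨i, j, j', rfl, rfl, hj⟩)⟩
  · exact center i j hj
  · exact step i j j' hj
  · exact add_comm (spiderLabel ℓ none) _ ▸ center i j hj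
  · exact add_comm (spiderLabel ℓ (some ⟨i, j⟩)) _ ▸ step i j j' hj

end Spider

theorem stmt5 (Δ : ℕ) (ℓ : Fin Δ → ℕ) (hΔ : 3 ≤ Δ) (hℓ : ∀ i, 1 ≤ ℓ i) :
    sumIndex (spider Δ ℓ) = Δ := by
  obtain ⟨φ, hφ⟩ := exists_addMonoidHom_injOn (Set.finite_range (spiderLabel ℓ))
  have hinj : Injective (φ ∘ spiderLabel ℓ) :=
    fun a b h => spiderLabel_injective hΔ (hφ ⟨a, rfl⟩ ⟨b, rfl⟩ h)
  refine sumIndex_eq_of_forall_le (fun f hf => ?_) hinj ?_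
  · exact (le_ncard_neighborSet_spider hℓ).trans
      (ncard_neighborSet_le_ncard_edgePlus_image hf none)
  · calc _ ≤ (Finset.univ.image fun t => φ (Pi.single t 1)).card := by
          refine ncard_edgePlus_image_le_card fun u v huv => ?_
          obtain ⟨t, ht⟩ := spiderLabel_add_mem_range huv
          rw [comp_apply, comp_apply, ← map_add, ← ht]
          exact Finset.mem_image_of_mem _ (Finset.mem_univ t)
      _ ≤ Δ := Finset.card_image_le.trans (by simp)
end

section
/- For the wheel graph W_Δ with Δ ≥ 3 spokes, the sum index of W_Δ equals max{5, Δ}. In particular, s(W_3) = s(W_4) = 5 and s(W_Δ) = Δ for Δ ≥ 5. -/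
open SimpleGraph Function

/-- The wheel `W_Δ`: a cycle on `ZMod Δ` together with a hub `none` adjacent to
every cycle vertex. -/
def wheel (Δ : ℕ) : SimpleGraph (Option (ZMod Δ)) :=
  SimpleGraph.fromRel (fun a b =>
    (a = none ∧ b ≠ none) ∨ ∃ i j : ZMod Δ, a = some i ∧ b = some j ∧ i - j = 1)


/-! The `Δ` hub sums `f v₀ + f vᵢ` are pairwise distinct, so `s(W_Δ) ≥ Δ`. With the hub labelled
`0` the hub sums are the rim labels themselves, so `Δ` sums suffice as soon as any two cyclically
consecutive rim labels add up to a rim label; for `Δ ≥ 5` an alternating run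
`n, -(n - 1), …, -2, 1`, whose consecutive sums are `±1`, closed up by two or three further labels
does this. For `Δ = 3, 4`, a rim sum `a + b` can equal a hub sum `h + x` only for `x` the label of a
vertex off that edge, and a short case check shows that this happens for at most one rim edge of
`W_3` and not for all four rim edges of `W_4`, which leaves at least five sums; explicit labelings
attain five. -/

open Set

section EdgeSums

variable {V : Type*} {G : SimpleGraph V} {f : V → ℤ}

lemma mem_edgePlus_image {x : ℤ} :
    x ∈ edgePlus f '' G.edgeSet ↔ ∃ a b, G.Adj a b ∧ f a + f b = x := by
  constructor
  · rintro ⟨e, he, rfl⟩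
    induction e with
    | _ a b => exact ⟨a, b, he, rfl⟩
  · rintro ⟨a, b, hab, rfl⟩
    exact ⟨s(a, b), hab, rfl⟩

lemma sumIndex_eq_of_le_of_exists {k : ℕ}
    (hle : ∀ f : V → ℤ, Injective f → k ≤ (edgePlus f '' G.edgeSet).ncard)
    (hex : ∃ f : V → ℤ, Injective f ∧ (edgePlus f '' G.edgeSet).ncard = k) :
    sumIndex G = k :=
  le_antisymm (Nat.sInf_le hex) (le_csInf ⟨k, hex⟩ fun _ ⟨f, hf, hk⟩ ↦ hk ▸ hle f hf)

end EdgeSums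

section Wheel

variable {Δ : ℕ}

lemma wheel_adj_none_some (i : ZMod Δ) : (wheel Δ).Adj none (some i) := by
  simp [wheel]

lemma wheel_adj_some_add_one [Nontrivial (ZMod Δ)] (i : ZMod Δ) :
    (wheel Δ).Adj (some i) (some (i + 1)) := by
  simp [wheel]

lemma edgePlus_image_wheel [Nontrivial (ZMod Δ)] (f : Option (ZMod Δ) → ℤ) :
    edgePlus f '' (wheel Δ).edgeSet =
      range (fun i ↦ f none + f (some i)) ∪ range (fun i ↦ f (some i) + f (some (i + 1))) := by
  ext x
  rw [mem_edgePlus_image]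
  constructor
  · rintro ⟨a, b, hab, rfl⟩
    simp only [wheel, fromRel_adj] at hab
    rcases hab with ⟨-, (⟨rfl, hb⟩ | ⟨i, j, rfl, rfl, hij⟩) | (⟨rfl, ha⟩ | ⟨i, j, rfl, rfl, hij⟩)⟩
    · obtain ⟨j, rfl⟩ := Option.ne_none_iff_exists'.1 hb
      exact Or.inl ⟨j, rfl⟩
    · obtain rfl := eq_add_of_sub_eq' hij
      exact Or.inr ⟨j, add_comm _ _⟩
    · obtain ⟨i, rfl⟩ := Option.ne_none_iff_exists'.1 ha
      exact Or.inl ⟨i, add_comm _ _⟩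
    · obtain rfl := eq_add_of_sub_eq' hij
      exact Or.inr ⟨j, rfl⟩
  · rintro (⟨i, rfl⟩ | ⟨i, rfl⟩)
    exacts [⟨_, _, wheel_adj_none_some i, rfl⟩, ⟨_, _, wheel_adj_some_add_one i, rfl⟩]

lemma le_ncard_edgePlus_image_wheel [NeZero Δ] {f : Option (ZMod Δ) → ℤ} (hf : Injective f) :
    Δ ≤ (edgePlus f '' (wheel Δ).edgeSet).ncard := by
  have hub : Injective fun i ↦ f none + f (some i) :=
    fun i j h ↦ Option.some_injective _ (hf (add_left_cancel h))
  calc Δ = (range fun i ↦ f none + f (some i)).ncard := by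
        rw [ncard_range_of_injective hub, Nat.card_zmod]
    _ ≤ _ := ncard_le_ncard <| range_subset_iff.2 fun i ↦
        mem_edgePlus_image.2 ⟨_, _, wheel_adj_none_some i, rfl⟩

lemma ncard_edgePlus_image_wheel_of_add_mem_range [Nontrivial (ZMod Δ)] {r : ZMod Δ → ℤ}
    (hr : Injective r) (hrim : ∀ i, r i + r (i + 1) ∈ range r) :
    (edgePlus (Option.elim' 0 r) '' (wheel Δ).edgeSet).ncard = Δ := by
  rw [edgePlus_image_wheel, union_eq_left.2]
  · simpa using ncard_range_of_injective hr
  · rintro x ⟨i, rfl⟩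
    simpa using hrim i

end Wheel

lemma edgePlus_image_wheel_three (f : Option (ZMod 3) → ℤ) :
    edgePlus f '' (wheel 3).edgeSet =
      ↑(({f none + f (some 0), f none + f (some 1), f none + f (some 2)} : Finset ℤ) ∪
        {f (some 0) + f (some 1), f (some 1) + f (some 2), f (some 2) + f (some 0)}) := by
  have huniv : (Finset.univ : Finset (ZMod 3)) = {0, 1, 2} := rfl
  rw [edgePlus_image_wheel, ← image_univ, ← image_univ, ← Finset.coe_univ,
    ← Finset.coe_image, ← Finset.coe_image, ← Finset.coe_union]
  simp only [huniv, Finset.image_insert, Finset.image_singleton]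
  rfl

lemma edgePlus_image_wheel_four (f : Option (ZMod 4) → ℤ) :
    edgePlus f '' (wheel 4).edgeSet =
      ↑(({f none + f (some 0), f none + f (some 1), f none + f (some 2), f none + f (some 3)} :
          Finset ℤ) ∪
        {f (some 0) + f (some 1), f (some 1) + f (some 2), f (some 2) + f (some 3),
          f (some 3) + f (some 0)}) := by
  have : Fact (1 < 4) := ⟨by norm_num⟩
  have huniv : (Finset.univ : Finset (ZMod 4)) = {0, 1, 2, 3} := rfl
  rw [edgePlus_image_wheel, ← image_univ, ← image_univ, ← Finset.coe_univ,
    ← Finset.coe_image, ← Finset.coe_image, ← Finset.coe_union]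
  simp only [huniv, Finset.image_insert, Finset.image_singleton]
  rfl

lemma five_le_card_wheel_three_sums {h a b c : ℤ} (hd : [h, a, b, c].Nodup) :
    5 ≤ (({h + a, h + b, h + c} : Finset ℤ) ∪ {a + b, b + c, c + a}).card := by
  simp only [List.nodup_cons, List.mem_cons, List.not_mem_nil] at hd
  have hub : ({h + a, h + b, h + c} : Finset ℤ).card = 3 :=
    Finset.card_eq_three.2 ⟨_, _, _, by omega, by omega, by omega, rfl⟩
  have hrim : ({a + b, b + c, c + a} : Finset ℤ).card = 3 :=
    Finset.card_eq_three.2 ⟨_, _, _, by omega, by omega, by omega, rfl⟩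
  -- `a + b` can only equal `h + c`, and `a + b = h + c`, `b + c = h + a` together force `a = c`
  have hinter : (({h + a, h + b, h + c} : Finset ℤ) ∩ {a + b, b + c, c + a}).card ≤ 1 :=
    Finset.card_le_one.2 fun x hx y hy ↦ by
      simp only [Finset.mem_inter, Finset.mem_insert, Finset.mem_singleton] at hx hy
      omega
  have := Finset.card_union_add_card_inter ({h + a, h + b, h + c} : Finset ℤ) {a + b, b + c, c + a}
  omega

lemma five_le_card_wheel_four_sums {h a b c d : ℤ} (hd : [h, a, b, c, d].Nodup) :
    5 ≤ (({h + a, h + b, h + c, h + d} : Finset ℤ) ∪ {a + b, b + c, c + d, d + a}).card := by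
  simp only [List.nodup_cons, List.mem_cons, List.not_mem_nil] at hd
  have hub : ({h + a, h + b, h + c, h + d} : Finset ℤ).card = 4 := by
    have hha : h + a ∉ ({h + b, h + c, h + d} : Finset ℤ) := by
      simp only [Finset.mem_insert, Finset.mem_singleton]; omega
    rw [Finset.card_insert_of_notMem hha,
      Finset.card_eq_three.2 ⟨_, _, _, by omega, by omega, by omega, rfl⟩]
  obtain ⟨x, hx_rim, hx_hub⟩ : ∃ x ∈ ({a + b, b + c, c + d, d + a} : Finset ℤ),
      x ∉ ({h + a, h + b, h + c, h + d} : Finset ℤ) := by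
    by_contra! hsub
    have hab := hsub (a + b) (by simp)
    have hbc := hsub (b + c) (by simp)
    have hcd := hsub (c + d) (by simp)
    have hda := hsub (d + a) (by simp)
    simp only [Finset.mem_insert, Finset.mem_singleton] at hab hbc hcd hda
    omega
  calc 5 = (insert x ({h + a, h + b, h + c, h + d} : Finset ℤ)).card := by
        rw [Finset.card_insert_of_notMem hx_hub, hub]
    _ ≤ _ := Finset.card_le_card <|
        Finset.insert_subset (Finset.mem_union_right _ hx_rim) Finset.subset_union_left

lemma five_le_ncard_edgePlus_image_wheel_three {f : Option (ZMod 3) → ℤ} (hf : Injective f) :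
    5 ≤ (edgePlus f '' (wheel 3).edgeSet).ncard := by
  rw [edgePlus_image_wheel_three, ncard_coe_finset]
  exact five_le_card_wheel_three_sums (.map (l := [none, some 0, some 1, some 2]) hf (by decide))

lemma five_le_ncard_edgePlus_image_wheel_four {f : Option (ZMod 4) → ℤ} (hf : Injective f) :
    5 ≤ (edgePlus f '' (wheel 4).edgeSet).ncard := by
  rw [edgePlus_image_wheel_four, ncard_coe_finset]
  exact five_le_card_wheel_four_sums
    (.map (l := [none, some 0, some 1, some 2, some 3]) hf (by decide))

lemma exists_wheel_three_labeling : ∃ f : Option (ZMod 3) → ℤ,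
    Injective f ∧ (edgePlus f '' (wheel 3).edgeSet).ncard = 5 :=
  ⟨Option.elim' 0 fun i ↦ i.val + 1, by decide,
    by rw [edgePlus_image_wheel_three, ncard_coe_finset]; rfl⟩

lemma exists_wheel_four_labeling : ∃ f : Option (ZMod 4) → ℤ,
    Injective f ∧ (edgePlus f '' (wheel 4).edgeSet).ncard = 5 :=
  ⟨Option.elim' 0 fun i ↦ ![-1, 2, 1, 3] i, by decide,
    by rw [edgePlus_image_wheel_four, ncard_coe_finset]; rfl⟩

section RimLabel

variable {n Δ k : ℕ}

/-- For odd `n ≥ 3` and `Δ ∈ {n + 2, n + 3}`, the rim labels `n, -(n - 1), n - 2, …, -2, 1`,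
followed by `-n` if `Δ = n + 3`, then by `n - 1, -1`. Cyclically consecutive labels add up to
`1`, `-1`, `n`, `1 - n`, `n - 2` or `n - 1`, all of which are labels again. -/
def wheelRimLabel (n Δ k : ℕ) : ℤ :=
  if k < n then (if k % 2 = 0 then (n : ℤ) - k else (k : ℤ) - n)
  else if k = Δ - 1 then -1
  else if k = Δ - 2 then (n : ℤ) - 1
  else -(n : ℤ)

lemma wheelRimLabel_ne_zero (hn : 3 ≤ n) : wheelRimLabel n Δ k ≠ 0 := by
  unfold wheelRimLabel; split_ifs <;> omega

lemma wheelRimLabel_injOn (hn : n % 2 = 1) (hn3 : 3 ≤ n) (hΔ : Δ = n + 2 ∨ Δ = n + 3)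
    {k₁ k₂ : ℕ} (h₁ : k₁ < Δ) (h₂ : k₂ < Δ) (h : wheelRimLabel n Δ k₁ = wheelRimLabel n Δ k₂) :
    k₁ = k₂ := by
  unfold wheelRimLabel at h; split_ifs at h <;> omega

lemma exists_wheelRimLabel_eq_add (hn : n % 2 = 1) (hn3 : 3 ≤ n) (hΔ : Δ = n + 2 ∨ Δ = n + 3)
    (hk : k < Δ) :
    ∃ j < Δ, wheelRimLabel n Δ k + wheelRimLabel n Δ ((k + 1) % Δ) = wheelRimLabel n Δ j := by
  obtain hk' | rfl := (by omega : k + 1 < Δ ∨ k = Δ - 1)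
  · rw [Nat.mod_eq_of_lt hk']
    rcases (by omega : k + 1 < n ∧ k % 2 = 0 ∨ k + 1 < n ∧ k % 2 = 1 ∨ k + 1 = n ∧ Δ = n + 2 ∨
        k + 1 = n ∧ Δ = n + 3 ∨ k = n ∧ Δ = n + 3 ∨ k = Δ - 2) with h | h | h | h | h | h
    · refine ⟨n - 1, by omega, ?_⟩
      simp (disch := omega) only [wheelRimLabel, if_pos, if_neg]; omega
    · refine ⟨Δ - 1, by omega, ?_⟩
      simp (disch := omega) only [wheelRimLabel, if_pos, if_neg, ↓reduceIte]; omega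
    · refine ⟨0, by omega, ?_⟩
      simp (disch := omega) only [wheelRimLabel, if_pos, if_neg, ↓reduceIte]; omega
    · refine ⟨1, by omega, ?_⟩
      simp (disch := omega) only [wheelRimLabel, if_pos, if_neg]; omega
    · refine ⟨Δ - 1, by omega, ?_⟩
      simp (disch := omega) only [wheelRimLabel, if_pos, if_neg, ↓reduceIte]; omega
    · refine ⟨2, by omega, ?_⟩
      simp (disch := omega) only [wheelRimLabel, if_pos, if_neg, ↓reduceIte]; omega
  · refine ⟨Δ - 2, by omega, ?_⟩
    rw [Nat.sub_add_cancel (by omega), Nat.mod_self]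
    simp (disch := omega) only [wheelRimLabel, if_pos, if_neg, ↓reduceIte]; omega

lemma exists_wheel_labeling_of_five_le (hΔ : 5 ≤ Δ) : ∃ f : Option (ZMod Δ) → ℤ,
    Injective f ∧ (edgePlus f '' (wheel Δ).edgeSet).ncard = Δ := by
  have : Fact (1 < Δ) := ⟨by omega⟩
  obtain ⟨n, hn, hn3, hnΔ⟩ : ∃ n, n % 2 = 1 ∧ 3 ≤ n ∧ (Δ = n + 2 ∨ Δ = n + 3) :=
    ⟨2 * ((Δ - 1) / 2) - 1, by omega, by omega, by omega⟩
  have hr : Injective fun i : ZMod Δ ↦ wheelRimLabel n Δ i.val := fun i j h ↦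
    ZMod.val_injective Δ (wheelRimLabel_injOn hn hn3 hnΔ i.val_lt j.val_lt h)
  refine ⟨Option.elim' 0 fun i ↦ wheelRimLabel n Δ i.val,
    Option.injective_iff.2 ⟨hr, fun ⟨i, hi⟩ ↦ wheelRimLabel_ne_zero hn3 hi⟩,
    ncard_edgePlus_image_wheel_of_add_mem_range hr fun i ↦ ?_⟩
  obtain ⟨j, hj, hsum⟩ := exists_wheelRimLabel_eq_add hn hn3 hnΔ i.val_lt
  refine ⟨j, ?_⟩
  simpa [ZMod.val_add, ZMod.val_one, ZMod.val_natCast, Nat.mod_eq_of_lt hj] using hsum.symm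

end RimLabel

theorem stmt6 (Δ : ℕ) (hΔ : 3 ≤ Δ) : sumIndex (wheel Δ) = max 5 Δ := by
  have : Fact (1 < Δ) := ⟨by omega⟩
  refine sumIndex_eq_of_le_of_exists (fun f hf ↦ max_le ?_ (le_ncard_edgePlus_image_wheel hf)) ?_
  · obtain rfl | rfl | h5 := (by omega : Δ = 3 ∨ Δ = 4 ∨ 5 ≤ Δ)
    · exact five_le_ncard_edgePlus_image_wheel_three hf
    · exact five_le_ncard_edgePlus_image_wheel_four hf
    · exact h5.trans (le_ncard_edgePlus_image_wheel hf)
  · obtain rfl | rfl | h5 := (by omega : Δ = 3 ∨ Δ = 4 ∨ 5 ≤ Δ)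
    · exact exists_wheel_three_labeling
    · exact exists_wheel_four_labeling
    · rw [max_eq_right h5]
      exact exists_wheel_labeling_of_five_le h5
end

section
/- A nonempty simple graph G has sum index 1 if and only if every connected component of G with an edge is a single edge (a copy of K_2), and sum index at most 2 only if G is a disjoint union of paths. -/
open SimpleGraph Function

/-!
Since `f v + f w` determines `w` when `f` is injective, a vertex has at most as many neighbours
as there are edge sums; conversely, a graph of maximum degree one is labelled with all edge sums
`0` by giving the ends of each edge opposite labels. Along a cycle `v₀ v₁ … vₙ₋₁`, consecutive
edge sums differ because `f vᵢ ≠ f vᵢ₊₂`, so if only two sums occur they alternate. Then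
`f vᵢ₊₂ - f vᵢ` is the same `d ≠ 0` for every even `i`, and going twice around the cycle gives
`n * d = 0`.
-/

namespace Function

theorem Periodic.two_lt_ncard_of_ne_add_two {g : ℕ → ℤ} {n : ℕ} (hper : Periodic g n)
    (hn : 0 < n) (hg : ∀ i, g i ≠ g (i + 2)) {S : Set ℤ} (hS : S.Finite)
    (hsum : ∀ i, g i + g (i + 1) ∈ S) : 2 < S.ncard := by
  by_contra! hS2
  set s : ℕ → ℤ := fun i ↦ g i + g (i + 1) with hs
  have hs_succ : ∀ i, s (i + 1) - s i = g (i + 2) - g i := fun i ↦ by simp only [hs]; ring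
  have hs_ne : ∀ i, s i ≠ s (i + 1) := fun i h ↦ hg i (by linarith [hs_succ i])
  have hs_two : ∀ i, s (i + 2) = s i := by
    intro i
    by_contra h
    have hsub : {s i, s (i + 1), s (i + 2)} ⊆ S := by
      rintro x (rfl | rfl | rfl) <;> exact hsum _
    have := Set.ncard_le_ncard hsub hS
    rw [Set.ncard_eq_three.mpr ⟨_, _, _, hs_ne i, Ne.symm h, hs_ne (i + 1), rfl⟩] at this
    omega
  have hs_even : ∀ k, s (2 * k) = s 0 ∧ s (2 * k + 1) = s 1 := by
    intro k
    induction k with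
    | zero => simp
    | succ k ih =>
      exact ⟨(hs_two (2 * k)).trans ih.1, (hs_two (2 * k + 1)).trans ih.2⟩
  have hg_even : ∀ k : ℕ, g (2 * k) = g 0 + k * (g 2 - g 0) := by
    intro k
    induction k with
    | zero => simp
    | succ k ih =>
      have h := hs_succ (2 * k)
      rw [(hs_even k).1, (hs_even k).2, hs_succ 0] at h
      rw [show 2 * (k + 1) = 2 * k + 2 by ring]
      push_cast
      linarith
  have hreturn : g (2 * n) = g 0 := by simpa [mul_comm] using hper.nat_mul_eq 2
  have : (n : ℤ) * (g 2 - g 0) = 0 := by linarith [hg_even n]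
  rcases mul_eq_zero.mp this with h | h
  · omega
  · exact hg 0 (by linarith)

end Function

namespace SimpleGraph.Walk

variable {V : Type*} {G : SimpleGraph V} {v : V} {p : G.Walk v v}

theorem IsCycle.adj_getVert_mod (hp : p.IsCycle) (i : ℕ) :
    G.Adj (p.getVert (i % p.length)) (p.getVert ((i + 1) % p.length)) := by
  have hlt := Nat.mod_lt i (by linarith [hp.three_le_length] : 0 < p.length)
  convert p.adj_getVert_succ hlt using 1
  rw [Nat.add_mod_eq_ite, Nat.one_mod_eq_one.mpr (by linarith [hp.three_le_length])]
  split_ifs with h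
  · rw [show i % p.length + 1 - p.length = 0 by omega, getVert_zero,
      show i % p.length + 1 = p.length by omega, getVert_length]
  · rfl

theorem IsCycle.getVert_mod_ne_getVert_add_two_mod (hp : p.IsCycle) (i : ℕ) :
    p.getVert (i % p.length) ≠ p.getVert ((i + 2) % p.length) := by
  have h3 := hp.three_le_length
  have hlt := Nat.mod_lt i (by omega : 0 < p.length)
  have hlt₂ := Nat.mod_lt (i + 2) (by omega : 0 < p.length)
  intro h
  have := hp.getVert_injOn' (by simp only [Set.mem_ofPred_eq]; omega)
    (by simp only [Set.mem_ofPred_eq]; omega) h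
  rw [Nat.add_mod_eq_ite, Nat.mod_eq_of_lt (by omega : 2 < p.length)] at this
  split_ifs at this <;> omega

end SimpleGraph.Walk

@[simp]
theorem edgePlus_mk {V : Type*} (f : V → ℤ) (u v : V) : edgePlus f s(u, v) = f u + f v := rfl

namespace SimpleGraph

variable {V : Type*} (G : SimpleGraph V)

theorem sumIndex_le_ncard {f : V → ℤ} (hf : Injective f) :
    sumIndex G ≤ (edgePlus f '' G.edgeSet).ncard :=
  Nat.sInf_le ⟨f, hf, rfl⟩

theorem exists_injective_ncard_eq_sumIndex [Countable V] :
    ∃ f : V → ℤ, Injective f ∧ (edgePlus f '' G.edgeSet).ncard = sumIndex G := by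
  obtain ⟨e, he⟩ := Countable.exists_injective_nat V
  exact Nat.sInf_mem (s := {k | ∃ f : V → ℤ, Injective f ∧ (edgePlus f '' G.edgeSet).ncard = k})
    ⟨_, _, Nat.cast_injective.comp he, rfl⟩

theorem one_le_sumIndex [Finite V] (hG : G.edgeSet.Nonempty) : 1 ≤ sumIndex G := by
  obtain ⟨f, -, hf⟩ := G.exists_injective_ncard_eq_sumIndex
  rw [← hf, Nat.one_le_iff_ne_zero, Ne, Set.ncard_eq_zero]
  exact (hG.image _).ne_empty

theorem ncard_neighborSet_le_ncard_edgePlus {f : V → ℤ} (hf : Injective f)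
    (hfin : (edgePlus f '' G.edgeSet).Finite) (v : V) :
    (G.neighborSet v).ncard ≤ (edgePlus f '' G.edgeSet).ncard :=
  Set.ncard_le_ncard_of_injOn (fun w ↦ f v + f w) (fun w hw ↦ ⟨s(v, w), hw, rfl⟩)
    (fun _ _ _ _ h ↦ hf (add_left_cancel h)) hfin

/-- With `e` an enumeration of `V`, the smaller end `a` of an edge gets `e a + 1`, the larger end
`-(e a + 1)`, and an isolated vertex `x` gets `e x + 1`. -/
theorem exists_injective_edgePlus_eq_zero [Countable V]
    (hG : ∀ v w u, G.Adj v w → G.Adj v u → w = u) :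
    ∃ f : V → ℤ, Injective f ∧ ∀ e ∈ G.edgeSet, edgePlus f e = 0 := by
  classical
  obtain ⟨e, he⟩ := Countable.exists_injective_nat V
  let f : V → ℤ := fun x ↦
    if h : ∃ w, G.Adj x w ∧ e w < e x then -(e h.choose + 1 : ℤ) else e x + 1
  have hf_lt : ∀ a b, G.Adj a b → e a < e b → f a = e a + 1 ∧ f b = -(e a + 1 : ℤ) := by
    intro a b hab hlt
    have ha : ¬∃ w, G.Adj a w ∧ e w < e a := fun ⟨w, hw, hwa⟩ ↦ by
      rw [hG a w b hw hab] at hwa; omega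
    have hb : ∃ w, G.Adj b w ∧ e w < e b := ⟨a, hab.symm, hlt⟩
    refine ⟨dif_neg ha, ?_⟩
    simp only [f, dif_pos hb, hG b _ a hb.choose_spec.1 hab.symm]
  refine ⟨f, fun x y hxy ↦ ?_, ?_⟩
  · by_cases hx : ∃ w, G.Adj x w ∧ e w < e x <;> by_cases hy : ∃ w, G.Adj y w ∧ e w < e y <;>
      simp only [f, hx, hy, dite_true, dite_false] at hxy
    · have hw : hx.choose = hy.choose := he (by omega)
      exact hG _ x y hx.choose_spec.1.symm (hw ▸ hy.choose_spec.1.symm)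
    · omega
    · omega
    · exact he (by omega)
  · rintro ⟨a, b⟩ (hab : G.Adj a b)
    rcases lt_or_gt_of_ne (he.ne hab.ne) with hlt | hlt
    · obtain ⟨ha, hb⟩ := hf_lt a b hab hlt
      simp [ha, hb]
    · obtain ⟨hb, ha⟩ := hf_lt b a hab.symm hlt
      simp [ha, hb]

theorem isAcyclic_of_ncard_edgePlus_le_two {f : V → ℤ} (hf : Injective f)
    (hfin : (edgePlus f '' G.edgeSet).Finite) (h2 : (edgePlus f '' G.edgeSet).ncard ≤ 2) :
    G.IsAcyclic := by
  intro v p hp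
  have := Periodic.two_lt_ncard_of_ne_add_two (g := fun i ↦ f (p.getVert (i % p.length)))
    (n := p.length) (fun i ↦ by simp only [Nat.add_mod_right]) (by linarith [hp.three_le_length])
    (fun i h ↦ hp.getVert_mod_ne_getVert_add_two_mod i (hf h)) hfin
    (fun i ↦ ⟨_, hp.adj_getVert_mod i, edgePlus_mk _ _ _⟩)
  omega

end SimpleGraph

theorem stmt9_general {V : Type*} [Fintype V] (G : SimpleGraph V)
    [DecidableRel G.Adj] (hG : G.edgeSet.Nonempty) :
    (sumIndex G = 1 ↔ ∀ v w u, G.Adj v w → G.Adj v u → w = u) ∧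
    (sumIndex G ≤ 2 → G.IsAcyclic ∧ ∀ v, G.degree v ≤ 2) := by
  obtain ⟨f, hf, hcard⟩ := G.exists_injective_ncard_eq_sumIndex
  have hfin : (edgePlus f '' G.edgeSet).Finite := Set.toFinite _
  have hdeg (v : V) : G.degree v ≤ sumIndex G := by
    rw [← hcard, ← card_neighborFinset_eq_degree, ← Set.ncard_coe_finset, coe_neighborFinset]
    exact G.ncard_neighborSet_le_ncard_edgePlus hf hfin v
  refine ⟨⟨fun h1 v w u hw hu ↦ ?_, fun h ↦ ?_⟩, fun h2 ↦ ⟨?_, fun v ↦ (hdeg v).trans h2⟩⟩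
  · have h := (hdeg v).trans h1.le
    rw [← card_neighborSet_eq_degree, Fintype.card_le_one_iff] at h
    exact congrArg Subtype.val (h ⟨w, hw⟩ ⟨u, hu⟩)
  · obtain ⟨f₀, hf₀, hzero⟩ := G.exists_injective_edgePlus_eq_zero h
    have h₀ : (edgePlus f₀ '' G.edgeSet).ncard ≤ 1 :=
      (Set.ncard_le_one_iff_subset_singleton).mpr ⟨0, by rintro _ ⟨e, he, rfl⟩; exact hzero e he⟩
    linarith [G.sumIndex_le_ncard hf₀, G.one_le_sumIndex hG]
  · exact G.isAcyclic_of_ncard_edgePlus_le_two hf hfin (hcard ▸ h2)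

theorem stmt9 {V : Type*} [Fintype V] [DecidableEq V] (G : SimpleGraph V)
    [DecidableRel G.Adj] (hG : G.edgeSet.Nonempty) :
    (sumIndex G = 1 ↔ ∀ v w u, G.Adj v w → G.Adj v u → w = u) ∧
    (sumIndex G ≤ 2 → G.IsAcyclic ∧ ∀ v, G.degree v ≤ 2) :=
  stmt9_general G hG
end

section
/- For every positive integer r, the number of points x = (x_1,…,x_k) ∈ ℤ^k with ‖x‖₁ = r and x_1 + ⋯ + x_k = (1 + (−1)^{r+1})/2 (i.e., 1 if r is odd and 0 if r is even) equals ∑_{j=1}^{k} C(k,j)·C(⌈r/2⌉ + j − 1, j − 1)·C(⌊r/2⌋ − 1, k − j − 1), with the conventions C(−1, t) = 0 for t ≥ 0 and C(−1, −1) = 1. -/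
/-!
Write `x = x⁺ - x⁻` coordinatewise. The conditions `‖x‖₁ = r` and `∑ xᵢ = r mod 2` say exactly
that `∑ xᵢ⁺ = ⌈r/2⌉` and `∑ xᵢ⁻ = ⌊r/2⌋`. Group the points by the set `T` of their `j`
nonnegative coordinates: these form a weak composition of `⌈r/2⌉` into `j` parts
(`C(⌈r/2⌉ + j - 1, j - 1)` choices, stars and bars), and the negative coordinates a composition of
`⌊r/2⌋` into `k - j` positive parts (`C(⌊r/2⌋ - 1, k - j - 1)` choices; the conventions for
`C(-1, ·)` cover `⌊r/2⌋ = 0`). The term `j = 0` vanishes because `⌈r/2⌉ ≥ 1`.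
-/

/-- Binomial coefficient with integer arguments, with the conventions
`C(−1, −1) = 1`, `C(−1, t) = 0` for `t ≥ 0`, and `C(a, −1) = 0` for `a ≥ 0`. -/
def extChoose (a b : ℤ) : ℕ :=
  if a = -1 ∧ b = -1 then 1
  else if 0 ≤ a ∧ 0 ≤ b then a.toNat.choose b.toNat
  else 0

open Finset

lemma extChoose_sub_one_sub_one (n t : ℕ) :
    extChoose ((n : ℤ) - 1) ((t : ℤ) - 1) = if t ≤ n then t.multichoose (n - t) else 0 := by
  unfold extChoose
  rcases Nat.eq_zero_or_pos t with rfl | ht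
  · rcases Nat.eq_zero_or_pos n with rfl | hn
    · simp
    · obtain ⟨n, rfl⟩ := Nat.exists_eq_add_of_lt hn
      simp [Nat.multichoose_zero_succ]
  rcases Nat.eq_zero_or_pos n with rfl | hn
  · simp
  rw [if_neg (by omega), if_pos (by omega), show ((n : ℤ) - 1).toNat = n - 1 by omega,
    show ((t : ℤ) - 1).toNat = t - 1 by omega]
  split_ifs with htn
  · rw [Nat.multichoose_eq, show t + (n - t) - 1 = n - 1 by omega, Nat.choose_symm_of_eq_add]
    omega
  · exact Nat.choose_eq_zero_of_lt (by omega)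

lemma Nat.multichoose_eq_choose_pred {j : ℕ} (hj : 1 ≤ j) (a : ℕ) :
    j.multichoose a = (a + j - 1).choose (j - 1) := by
  obtain ⟨j, rfl⟩ := Nat.exists_eq_add_of_le' hj
  rw [Nat.multichoose_eq, Nat.add_sub_cancel, show j + 1 + a - 1 = a + j by omega,
    show a + (j + 1) - 1 = a + j by omega, Nat.choose_symm_add]

lemma one_add_neg_one_pow_succ_div_two (r : ℕ) :
    (1 + (-1 : ℤ) ^ (r + 1)) / 2 = ((r + 1) / 2 : ℕ) - (r / 2 : ℕ) := by
  obtain ⟨m, rfl | rfl⟩ := Nat.even_or_odd' r <;> simp [pow_succ, pow_mul] <;> omega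

lemma sum_add_one_eq_sum_add_card (α : Type*) [Fintype α] (f : α → ℕ) :
    ∑ a, (f a + 1) = ∑ a, f a + Fintype.card α := by
  simp [sum_add_distrib]

lemma natCard_sum_eq (α : Type*) [Fintype α] (n : ℕ) :
    Nat.card {f : α → ℕ // ∑ a, f a = n} = (Fintype.card α).multichoose n := by
  classical
  rw [← Nat.card_congr (Sym.equivNatSumOfFintype α n), Nat.card_eq_fintype_card,
    Sym.card_sym_eq_multichoose]

lemma natCard_sum_add_one_eq (α : Type*) [Fintype α] (n : ℕ) :
    Nat.card {f : α → ℕ // ∑ a, (f a + 1) = n} =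
      extChoose ((n : ℤ) - 1) ((Fintype.card α : ℤ) - 1) := by
  rw [extChoose_sub_one_sub_one]
  split_ifs with h
  · rw [← natCard_sum_eq]
    exact Nat.card_congr <| Equiv.subtypeEquivRight fun f => by
      rw [sum_add_one_eq_sum_add_card]; omega
  · have : IsEmpty {f : α → ℕ // ∑ a, (f a + 1) = n} :=
      ⟨fun f => by have := sum_add_one_eq_sum_add_card α f.1; omega⟩
    exact Nat.card_of_isEmpty

instance (α : Type*) [Fintype α] (n : ℕ) : Finite {f : α → ℕ // ∑ a, f a = n} := by
  classical exact Finite.of_equiv _ (Sym.equivNatSumOfFintype α n)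

instance (α : Type*) [Fintype α] (n : ℕ) : Finite {f : α → ℕ // ∑ a, (f a + 1) = n} :=
  Finite.of_injective
    (fun f => (⟨f.1, by have := sum_add_one_eq_sum_add_card α f.1; omega⟩ :
      {g : α → ℕ // ∑ a, g a = n - Fintype.card α}))
    fun _ _ h => Subtype.ext (by simpa using h)

section

variable {ι : Type*} [Fintype ι] [DecidableEq ι]

/-- `T` records the nonnegative coordinates; a negative coordinate `-(m + 1)` is stored as `m`. -/
def signMagnitudeEquiv : Finset ι × (ι → ℕ) ≃ (ι → ℤ) where
  toFun p i := if i ∈ p.1 then (p.2 i : ℤ) else -(p.2 i + 1 : ℤ)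
  invFun x :=
    (({i | 0 ≤ x i} : Finset ι), fun i => if 0 ≤ x i then (x i).toNat else (-x i - 1).toNat)
  left_inv p := by
    ext i
    · by_cases hi : i ∈ p.1 <;> simp [hi]; omega
    · by_cases hi : i ∈ p.1 <;> simp [hi]; omega
  right_inv x := by
    ext i
    by_cases hi : 0 ≤ x i <;> simp [hi]; omega

lemma sum_toNat_signMagnitudeEquiv (p : Finset ι × (ι → ℕ)) :
    ∑ i, (signMagnitudeEquiv p i).toNat = ∑ i ∈ p.1, p.2 i := by
  have h (i : ι) : (signMagnitudeEquiv p i).toNat = if i ∈ p.1 then p.2 i else 0 := by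
    by_cases hi : i ∈ p.1 <;> simp [signMagnitudeEquiv, hi]
  simp only [h, sum_ite_mem, univ_inter]

lemma sum_toNat_neg_signMagnitudeEquiv (p : Finset ι × (ι → ℕ)) :
    ∑ i, (-signMagnitudeEquiv p i).toNat = ∑ i ∈ p.1ᶜ, (p.2 i + 1) := by
  have h (i : ι) : (-signMagnitudeEquiv p i).toNat = if i ∈ p.1ᶜ then p.2 i + 1 else 0 := by
    by_cases hi : i ∈ p.1 <;> simp [signMagnitudeEquiv, hi]
  simp only [h, sum_ite_mem, univ_inter]

def sumSplitEquiv (T : Finset ι) (A B : ℕ) :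
    {u : ι → ℕ // ∑ i ∈ T, u i = A ∧ ∑ i ∈ Tᶜ, (u i + 1) = B} ≃
      {v : T → ℕ // ∑ i, v i = A} × {w : {i // i ∉ T} → ℕ // ∑ i, (w i + 1) = B} :=
  ((Equiv.piEquivPiSubtypeProd (· ∈ T) fun _ => ℕ).subtypeEquiv fun u => by
    rw [sum_subtype T (fun _ => Iff.rfl), sum_subtype Tᶜ (fun _ => mem_compl)]
    rfl).trans Equiv.subtypeProdEquivProd

instance (T : Finset ι) (A B : ℕ) :
    Finite {u : ι → ℕ // ∑ i ∈ T, u i = A ∧ ∑ i ∈ Tᶜ, (u i + 1) = B} :=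
  Finite.of_equiv _ (sumSplitEquiv T A B).symm

lemma natCard_sumSplit (T : Finset ι) (A B : ℕ) :
    Nat.card {u : ι → ℕ // ∑ i ∈ T, u i = A ∧ ∑ i ∈ Tᶜ, (u i + 1) = B} =
      (#T).multichoose A * extChoose ((B : ℤ) - 1) ((Fintype.card ι : ℤ) - #T - 1) := by
  rw [Nat.card_congr (sumSplitEquiv T A B), Nat.card_prod, natCard_sum_eq,
    natCard_sum_add_one_eq, Fintype.card_coe, Fintype.card_subtype_compl,
    Fintype.card_coe, Nat.cast_sub (card_le_univ T)]

theorem natCard_sum_toNat_eq (A B : ℕ) :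
    Nat.card {x : ι → ℤ // ∑ i, (x i).toNat = A ∧ ∑ i, (-x i).toNat = B} =
      ∑ j ∈ range (Fintype.card ι + 1), (Fintype.card ι).choose j *
        (j.multichoose A * extChoose ((B : ℤ) - 1) ((Fintype.card ι : ℤ) - j - 1)) := by
  let fiber (T : Finset ι) (u : ι → ℕ) := ∑ i ∈ T, u i = A ∧ ∑ i ∈ Tᶜ, (u i + 1) = B
  have e : {x : ι → ℤ // ∑ i, (x i).toNat = A ∧ ∑ i, (-x i).toNat = B} ≃
      {p : Finset ι × (ι → ℕ) // fiber p.1 p.2} :=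
    (signMagnitudeEquiv.subtypeEquivOfSubtype.symm).trans (Equiv.subtypeEquivRight fun p => by
      rw [sum_toNat_signMagnitudeEquiv, sum_toNat_neg_signMagnitudeEquiv])
  rw [Nat.card_congr (e.trans (Equiv.subtypeProdEquivSigmaSubtype fiber)), Nat.card_sigma,
    ← powerset_univ, sum_congr rfl fun T _ => natCard_sumSplit T A B, ← card_univ,
    sum_powerset_apply_card fun j => j.multichoose A *
      extChoose ((B : ℤ) - 1) ((#(univ : Finset ι) : ℤ) - j - 1)]
  rfl

end

lemma sum_abs_eq_and_sum_eq_iff {ι : Type*} [Fintype ι] (x : ι → ℤ) (A B : ℕ) :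
    (∑ i, |x i| = A + B ∧ ∑ i, x i = A - B) ↔
      (∑ i, (x i).toNat = A ∧ ∑ i, (-x i).toNat = B) := by
  have habs : ∑ i, |x i| = ∑ i, ((x i).toNat : ℤ) + ∑ i, ((-x i).toNat : ℤ) := by
    rw [← sum_add_distrib]
    exact sum_congr rfl fun i _ => by rw [abs_eq_max_neg]; omega
  have hsum : ∑ i, x i = ∑ i, ((x i).toNat : ℤ) - ∑ i, ((-x i).toNat : ℤ) := by
    rw [← sum_sub_distrib]
    exact sum_congr rfl fun i _ => by omega
  rw [habs, hsum, ← Nat.cast_sum, ← Nat.cast_sum]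
  constructor <;> intro h <;> omega

theorem stmt12 (k r : ℕ) (hr : 0 < r) :
    Set.ncard {x : Fin k → ℤ |
        (∑ i, |x i|) = (r : ℤ) ∧ (∑ i, x i) = (1 + (-1 : ℤ) ^ (r + 1)) / 2} =
      ∑ j ∈ Finset.Icc 1 k,
        k.choose j * (((r + 1) / 2 + j - 1).choose (j - 1)) *
          extChoose ((r / 2 : ℕ) - 1 : ℤ) ((k : ℤ) - (j : ℤ) - 1) := by
  have hr' : (r : ℤ) = ((r + 1) / 2 : ℕ) + (r / 2 : ℕ) := by omega
  simp only [hr', one_add_neg_one_pow_succ_div_two, sum_abs_eq_and_sum_eq_iff]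
  rw [← Nat.card_coe_set_eq, Set.coe_ofPred, natCard_sum_toNat_eq, Fintype.card_fin]
  refine (sum_subset (fun j hj => ?_) fun j hj hj' => ?_).symm.trans
    (sum_congr rfl fun j hj => ?_)
  · rw [mem_Icc] at hj
    exact mem_range.2 (by omega)
  · obtain rfl : j = 0 := by rw [mem_range] at hj; rw [mem_Icc] at hj'; omega
    rw [show (r + 1) / 2 = (r - 1) / 2 + 1 by omega, Nat.multichoose_zero_succ, zero_mul,
      mul_zero]
  · rw [Nat.multichoose_eq_choose_pred (mem_Icc.1 hj).1, mul_assoc]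
end

section
/- For every nonempty finite simple graph G, the difference index satisfies d(G) ≥ max{⌈χ'(G)/2⌉, δ(G)}, where χ'(G) is the chromatic index and δ(G) is the minimum degree. -/
open SimpleGraph Function

/-- A proper edge coloring with `n` colors: distinct edges sharing a vertex get
distinct colors. -/
def IsProperEdgeColoring {V : Type*} (G : SimpleGraph V) (n : ℕ) (C : Sym2 V → Fin n) : Prop :=
  ∀ e₁ ∈ G.edgeSet, ∀ e₂ ∈ G.edgeSet, e₁ ≠ e₂ → (∃ v, v ∈ e₁ ∧ v ∈ e₂) → C e₁ ≠ C e₂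

/-- The chromatic index: minimum number of colors in a proper edge coloring. -/
noncomputable def chromaticIndex {V : Type*} (G : SimpleGraph V) : ℕ :=
  sInf {n | ∃ C : Sym2 V → Fin n, IsProperEdgeColoring G n C}

/-! Fix an injective labeling `f` realising `d(G) = k` distinct differences. The neighbours of a
vertex `v` with the largest label have pairwise distinct labels below `f v`, so they produce
`deg v ≥ δ(G)` distinct differences. For `χ'(G) ≤ 2k`, colour an edge by its difference `d`
together with the parity of `⌊m / d⌋`, where `m` is its lower label: two edges at `v` with the
same difference `d` go to `f v - d` and `f v + d`, so their lower labels `f v - d` and `f v` lie in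
consecutive blocks of length `d`. -/

theorem chromaticIndex_le_ncard {V α : Type*} {G : SimpleGraph V} {s : Set α} (hs : s.Finite)
    (hne : s.Nonempty) (c : Sym2 V → α) (hmaps : Set.MapsTo c G.edgeSet s)
    (hc : ∀ e₁ ∈ G.edgeSet, ∀ e₂ ∈ G.edgeSet, e₁ ≠ e₂ → (∃ v, v ∈ e₁ ∧ v ∈ e₂) → c e₁ ≠ c e₂) :
    chromaticIndex G ≤ s.ncard := by
  classical
  have := hs.to_subtype
  obtain ⟨a₀, ha₀⟩ := hne
  let r : α → s := fun a => if h : a ∈ s then ⟨a, h⟩ else ⟨a₀, ha₀⟩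
  have hr : ∀ a ∈ s, (r a : α) = a := fun a ha => by simp [r, ha]
  refine Nat.sInf_le ⟨Finite.equivFin s ∘ r ∘ c, fun e₁ he₁ e₂ he₂ hdiff hshare hC => ?_⟩
  refine hc e₁ he₁ e₂ he₂ hdiff hshare ?_
  rw [← hr _ (hmaps he₁), ← hr _ (hmaps he₂)]
  exact congrArg Subtype.val ((Finite.equivFin s).injective hC)

def lowerParity (a b : ℤ) : ZMod 2 :=
  ((min a b / |a - b| : ℤ) : ZMod 2)

theorem lowerParity_comm (a b : ℤ) : lowerParity a b = lowerParity b a := by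
  rw [lowerParity, lowerParity, min_comm, abs_sub_comm]

theorem lowerParity_sub_ne_lowerParity_add (a : ℤ) {d : ℤ} (hd : 0 < d) :
    lowerParity a (a - d) ≠ lowerParity a (a + d) := by
  have hlow : lowerParity a (a - d) = (((a - d) / d : ℤ) : ZMod 2) := by
    rw [lowerParity, min_eq_right (by linarith), sub_sub_cancel, abs_of_pos hd]
  have hhigh : lowerParity a (a + d) = ((a / d : ℤ) : ZMod 2) := by
    rw [lowerParity, min_eq_left (by linarith), sub_add_cancel_left, abs_neg, abs_of_pos hd]
  rw [hlow, hhigh, Int.sub_ediv_of_dvd a (dvd_refl d), Int.ediv_self hd.ne', Int.cast_sub,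
    Int.cast_one, Ne, sub_eq_self]
  exact one_ne_zero

theorem lowerParity_ne_of_abs_sub_eq {a b c : ℤ} (hbc : b ≠ c) (h : |a - b| = |a - c|) :
    lowerParity a b ≠ lowerParity a c := by
  obtain ⟨d, hd, rfl, rfl⟩ | ⟨d, hd, rfl, rfl⟩ :
      (∃ d, 0 < d ∧ b = a - d ∧ c = a + d) ∨ (∃ d, 0 < d ∧ b = a + d ∧ c = a - d) := by
    rcases abs_eq_abs.mp h with h | h
    · exact absurd (by linarith) hbc
    · rcases lt_or_gt_of_ne (show b ≠ a by rintro rfl; exact hbc (by linarith)) with hba | hab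
      · exact Or.inl ⟨a - b, by linarith, by ring, by linarith⟩
      · exact Or.inr ⟨b - a, by linarith, by ring, by linarith⟩
  · exact lowerParity_sub_ne_lowerParity_add a hd
  · exact (lowerParity_sub_ne_lowerParity_add a hd).symm

def edgeParity {V : Type*} (f : V → ℤ) : Sym2 V → ZMod 2 :=
  Sym2.lift ⟨fun u v => lowerParity (f u) (f v), fun _ _ => lowerParity_comm _ _⟩

section DifferenceLabeling

variable {V : Type*} {G : SimpleGraph V} {f : V → ℤ}

theorem edgeParity_ne_of_edgeMinus_eq (hf : Injective f) {v u w : V} (huw : u ≠ w)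
    (h : edgeMinus f s(v, u) = edgeMinus f s(v, w)) :
    edgeParity f s(v, u) ≠ edgeParity f s(v, w) :=
  lowerParity_ne_of_abs_sub_eq (hf.ne huw) h

theorem chromaticIndex_le_two_mul_ncard_edgeMinus_image [Finite V] (hf : Injective f)
    (hG : G.edgeSet.Nonempty) : chromaticIndex G ≤ 2 * (edgeMinus f '' G.edgeSet).ncard := by
  have hfin : (edgeMinus f '' G.edgeSet).Finite := G.edgeSet.toFinite.image _
  have hcolors := chromaticIndex_le_ncard (G := G) (hfin.prod (Set.finite_univ (α := ZMod 2)))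
    ((hG.image _).prod Set.univ_nonempty) (fun e => (edgeMinus f e, edgeParity f e))
    (fun e he => ⟨Set.mem_image_of_mem _ he, Set.mem_univ _⟩) ?_
  · rwa [Set.ncard_prod, Set.ncard_univ, Nat.card_eq_fintype_card, ZMod.card, mul_comm] at hcolors
  rintro e₁ - e₂ - hne ⟨v, hv₁, hv₂⟩ hC
  obtain ⟨u, rfl⟩ := Sym2.mem_iff_exists.mp hv₁
  obtain ⟨w, rfl⟩ := Sym2.mem_iff_exists.mp hv₂
  have huw : u ≠ w := by rintro rfl; exact hne rfl
  exact edgeParity_ne_of_edgeMinus_eq hf huw (Prod.ext_iff.mp hC).1 (Prod.ext_iff.mp hC).2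

theorem degree_le_ncard_edgeMinus_image [Fintype V] [DecidableRel G.Adj] (hf : Injective f)
    {v : V} (hv : ∀ u, f u ≤ f v) : G.degree v ≤ (edgeMinus f '' G.edgeSet).ncard := by
  rw [← card_neighborFinset_eq_degree, ← Set.ncard_coe_finset, coe_neighborFinset]
  refine Set.ncard_le_ncard_of_injOn (fun u => f v - f u) (fun u hu => ⟨s(v, u), hu, ?_⟩)
    (fun a _ b _ hab => hf (sub_right_injective hab)) (G.edgeSet.toFinite.image _)
  exact abs_of_nonneg (sub_nonneg.mpr (hv u))

theorem minDegree_le_ncard_edgeMinus_image [Fintype V] [DecidableRel G.Adj] (hf : Injective f) :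
    G.minDegree ≤ (edgeMinus f '' G.edgeSet).ncard := by
  cases isEmpty_or_nonempty V
  · simp [minDegree_of_subsingleton]
  · obtain ⟨v, hv⟩ := Finite.exists_max f
    exact (G.minDegree_le_degree v).trans (degree_le_ncard_edgeMinus_image hf hv)

theorem exists_injective_ncard_edgeMinus_image_eq_diffIndex [Countable V] (G : SimpleGraph V) :
    ∃ f : V → ℤ, Injective f ∧ (edgeMinus f '' G.edgeSet).ncard = diffIndex G := by
  obtain ⟨g, hg⟩ := Countable.exists_injective_nat V
  have hne : {k | ∃ f : V → ℤ, Injective f ∧ (edgeMinus f '' G.edgeSet).ncard = k}.Nonempty :=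
    ⟨_, fun v => (g v : ℤ), Nat.cast_injective.comp hg, rfl⟩
  exact Nat.sInf_mem hne

end DifferenceLabeling

theorem stmt14 {V : Type*} [Fintype V] (G : SimpleGraph V) [DecidableRel G.Adj]
    (hG : G.edgeSet.Nonempty) :
    max ((chromaticIndex G + 1) / 2) G.minDegree ≤ diffIndex G := by
  obtain ⟨f, hf, hk⟩ := exists_injective_ncard_edgeMinus_image_eq_diffIndex G
  rw [← hk]
  have hchi := chromaticIndex_le_two_mul_ncard_edgeMinus_image hf hG
  exact max_le (by omega) (minDegree_le_ncard_edgeMinus_image hf)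
end

section
/- For every integer n ≥ 2, the difference index of the complete graph K_n equals n − 1. -/
open SimpleGraph Function

/-!
Below any labeling `f`, the vertex `m` with the smallest label sees its neighbours at the
pairwise distinct differences `f v - f m > 0`, so every labeling realises at least `δ(G)`
differences; for `K_n` this gives `n - 1`. Conversely, labeling `K_n` by `0, …, n - 1`
leaves only the differences `1, …, n - 1`.
-/

namespace SimpleGraph

variable {V : Type*}

@[simp]
lemma edgeMinus_mk (f : V → ℤ) (u v : V) : edgeMinus f s(u, v) = |f u - f v| := rfl

lemma diffIndex_le_ncard {G : SimpleGraph V} {f : V → ℤ} (hf : Injective f) :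
    diffIndex G ≤ (edgeMinus f '' G.edgeSet).ncard :=
  Nat.sInf_le ⟨f, hf, rfl⟩

lemma edgeMinus_image_subset_Icc {G : SimpleGraph V} {f : V → ℤ} (hf : Injective f) {a b : ℤ}
    (hab : ∀ v, f v ∈ Set.Icc a b) : edgeMinus f '' G.edgeSet ⊆ Set.Icc 1 (b - a) := by
  rintro _ ⟨e, he, rfl⟩
  induction e using Sym2.ind with
  | _ u v =>
    have hne : f u ≠ f v := hf.ne (G.ne_of_adj he)
    obtain ⟨hau, hub⟩ := hab u
    obtain ⟨hav, hvb⟩ := hab v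
    rw [edgeMinus_mk]
    exact ⟨Int.one_le_abs (sub_ne_zero.mpr hne), abs_sub_le_iff.mpr ⟨by omega, by omega⟩⟩

lemma diffIndex_le_of_forall_mem_Icc {G : SimpleGraph V} {f : V → ℤ} (hf : Injective f) {a b : ℤ}
    (hab : ∀ v, f v ∈ Set.Icc a b) : diffIndex G ≤ (b - a).toNat := by
  calc diffIndex G ≤ (edgeMinus f '' G.edgeSet).ncard := diffIndex_le_ncard hf
    _ ≤ (Set.Icc 1 (b - a)).ncard :=
      Set.ncard_le_ncard (edgeMinus_image_subset_Icc hf hab) (Set.finite_Icc _ _)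
    _ = (b - a).toNat := by
      rw [Set.ncard_eq_toFinset_card', Set.toFinset_Icc, Int.card_Icc, add_sub_cancel_right]

lemma minDegree_le_ncard_edgeMinus_image [Fintype V] (G : SimpleGraph V) [DecidableRel G.Adj]
    {f : V → ℤ} (hf : Injective f) : G.minDegree ≤ (edgeMinus f '' G.edgeSet).ncard := by
  cases isEmpty_or_nonempty V
  · simp [minDegree_of_subsingleton]
  obtain ⟨m, hm⟩ := Finite.exists_min f
  calc G.minDegree ≤ G.degree m := G.minDegree_le_degree m
    _ = (G.neighborSet m).ncard := by
      rw [← card_neighborSet_eq_degree, Set.ncard_eq_toFinset_card', Set.toFinset_card]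
    _ ≤ (edgeMinus f '' G.edgeSet).ncard := by
      refine Set.ncard_le_ncard_of_injOn (fun v => f v - f m) (fun v hv => ?_) ?_
      · exact ⟨s(v, m), G.adj_symm hv, abs_of_nonneg (sub_nonneg.mpr (hm v))⟩
      · exact fun u _ v _ huv => hf (sub_left_injective huv)

lemma minDegree_le_diffIndex [Fintype V] (G : SimpleGraph V) [DecidableRel G.Adj] :
    G.minDegree ≤ diffIndex G := by
  obtain ⟨g, hg⟩ := exists_injective_nat V
  refine le_csInf ⟨_, _, Nat.cast_injective.comp hg, rfl⟩ ?_
  rintro _ ⟨f, hf, rfl⟩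
  exact G.minDegree_le_ncard_edgeMinus_image hf

end SimpleGraph

theorem stmt16_general (n : ℕ) :
    diffIndex (completeGraph (Fin n)) = n - 1 := by
  apply le_antisymm
  · have hupper := diffIndex_le_of_forall_mem_Icc (G := completeGraph (Fin n))
      (f := fun i => (i : ℤ)) (Nat.cast_injective.comp Fin.val_injective) (a := 0) (b := n - 1)
      (fun i => ⟨by positivity, by have := i.isLt; omega⟩)
    omega
  · simpa using minDegree_le_diffIndex (completeGraph (Fin n))

theorem stmt16 (n : ℕ) (hn : 2 ≤ n) :
    diffIndex (completeGraph (Fin n)) = n - 1 :=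
  stmt16_general n
end

section
/- For all positive integers n, m, the difference index of the complete bipartite graph K_{n,m} equals ⌈(n + m − 1)/2⌉. -/
open SimpleGraph Function

/-!
If `A` and `B` are the label sets of the two sides, every element of `A - B` is `±` an edge
difference, while Cauchy–Davenport gives `|A - B| ≥ n + m - 1`; hence at least
`⌈(n + m - 1) / 2⌉` absolute differences occur. Conversely, labelling one side by even and the
other by suitably shifted odd integers makes `A - B` a run of `n + m - 1` consecutive odd integers
that is almost symmetric about `0`.
-/

section

variable {α β : Type*}

lemma edgeMinus_image_completeBipartiteGraph (f : α ⊕ β → ℤ) :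
    edgeMinus f '' (completeBipartiteGraph α β).edgeSet =
      Set.range fun p : α × β => |f (.inl p.1) - f (.inr p.2)| := by
  rw [edgeSet_completeBipartiteGraph, ← Set.range_comp]
  rfl

open Finset Pointwise in
lemma card_add_card_sub_one_le_two_mul_ncard_edgeMinus [Fintype α] [Fintype β] [Nonempty α]
    [Nonempty β] (f : α ⊕ β → ℤ) (hf : Injective f) :
    Fintype.card α + Fintype.card β - 1 ≤
      2 * (edgeMinus f '' (completeBipartiteGraph α β).edgeSet).ncard := by
  classical
  rw [edgeMinus_image_completeBipartiteGraph]
  set T := Set.range fun p : α × β => |f (.inl p.1) - f (.inr p.2)|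
  set A := univ.image (f ∘ Sum.inl)
  set B := univ.image (f ∘ Sum.inr)
  have hA : #A = Fintype.card α := card_image_of_injective _ (hf.comp Sum.inl_injective)
  have hB : #B = Fintype.card β := card_image_of_injective _ (hf.comp Sum.inr_injective)
  have hsub : (↑(A + -B) : Set ℤ) ⊆ T ∪ -T := by
    intro x hx
    obtain ⟨_, ⟨a, rfl⟩, _, ⟨_, ⟨b, rfl⟩, rfl⟩, rfl⟩ := by
      simpa only [A, B, mem_coe, mem_add, mem_neg, mem_image, mem_univ, true_and] using hx
    have habs : |f (.inl a) - f (.inr b)| ∈ T := ⟨(a, b), rfl⟩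
    rw [comp_apply, comp_apply, ← sub_eq_add_neg]
    rcases abs_choice (f (.inl a) - f (.inr b)) with h | h
    · exact .inl (h ▸ habs)
    · exact .inr (Set.mem_neg.2 (h ▸ habs))
  calc Fintype.card α + Fintype.card β - 1 = #A + #(-B) - 1 := by rw [card_neg, hA, hB]
    _ ≤ #(A + -B) := cauchy_davenport_of_isAddTorsionFree (by simp [A]) (by simp [B])
    _ = (↑(A + -B) : Set ℤ).ncard := (Set.ncard_coe_finset _).symm
    _ ≤ (T ∪ -T).ncard :=
      Set.ncard_le_ncard hsub ((Set.finite_range _).union (Set.finite_range _).neg)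
    _ ≤ T.ncard + (-T).ncard := Set.ncard_union_le _ _
    _ = 2 * T.ncard := by rw [Set.ncard_neg, two_mul]

end

lemma exists_lt_two_mul_add_one_eq_abs {d : ℤ} {c : ℕ} (hodd : Odd d) (hd : |d| < 2 * c) :
    ∃ t < c, 2 * (t : ℤ) + 1 = |d| := by
  obtain ⟨k, rfl⟩ := hodd
  rcases abs_cases (2 * k + 1) with ⟨h, hs⟩ | ⟨h, hs⟩ <;> rw [h] at hd ⊢
  · exact ⟨k.toNat, by omega, by omega⟩
  · exact ⟨(-k - 1).toNat, by omega, by omega⟩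

/-- With `c = ⌈(n + m - 1) / 2⌉`, the differences `2i - 2j - (2n - 1 - 2c)` are odd and lie in
`[-(2c - 1), 2c - 1]`, so they have only `c` absolute values. -/
def oddBipartiteLabeling (n m : ℕ) : Fin n ⊕ Fin m → ℤ :=
  Sum.elim (fun i => 2 * i) (fun j => 2 * j + 2 * n - 1 - 2 * ((n + m) / 2 : ℕ))

lemma injective_oddBipartiteLabeling (n m : ℕ) : Injective (oddBipartiteLabeling n m) := by
  rintro (i | j) (i' | j') h <;> simp only [oddBipartiteLabeling, Sum.elim_inl, Sum.elim_inr] at h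
  · exact congrArg Sum.inl (Fin.ext (by omega))
  · omega
  · omega
  · exact congrArg Sum.inr (Fin.ext (by omega))

lemma ncard_edgeMinus_oddBipartiteLabeling_le (n m : ℕ) :
    (edgeMinus (oddBipartiteLabeling n m) '' (completeBipartiteGraph (Fin n) (Fin m)).edgeSet).ncard
      ≤ (n + m) / 2 := by
  have hsub : edgeMinus (oddBipartiteLabeling n m) ''
      (completeBipartiteGraph (Fin n) (Fin m)).edgeSet ⊆
        ↑((Finset.range ((n + m) / 2)).image fun t : ℕ => 2 * (t : ℤ) + 1) := by
    rw [edgeMinus_image_completeBipartiteGraph]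
    rintro _ ⟨⟨i, j⟩, rfl⟩
    simp only [oddBipartiteLabeling, Sum.elim_inl, Sum.elim_inr, Finset.coe_image,
      Finset.coe_range, Set.mem_image, Set.mem_Iio]
    have hi := i.isLt
    have hj := j.isLt
    refine exists_lt_two_mul_add_one_eq_abs ⟨i - j - n + ((n + m) / 2 : ℕ), by ring⟩
      (abs_lt.2 ⟨?_, ?_⟩) <;> omega
  calc _ ≤ _ := Set.ncard_le_ncard hsub (Finset.finite_toSet _)
    _ = Finset.card ((Finset.range ((n + m) / 2)).image fun t : ℕ => 2 * (t : ℤ) + 1) :=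
      Set.ncard_coe_finset _
    _ ≤ (n + m) / 2 := Finset.card_image_le.trans (Finset.card_range _).le

theorem stmt17 (n m : ℕ) (hn : 0 < n) (hm : 0 < m) :
    diffIndex (completeBipartiteGraph (Fin n) (Fin m)) = (n + m - 1 + 1) / 2 := by
  have : Nonempty (Fin n) := Fin.pos_iff_nonempty.1 hn
  have : Nonempty (Fin m) := Fin.pos_iff_nonempty.1 hm
  have hlabel := injective_oddBipartiteLabeling n m
  rw [Nat.sub_add_cancel (by omega : 1 ≤ n + m), diffIndex]
  apply le_antisymm
  · refine (Nat.sInf_le ?_).trans (ncard_edgeMinus_oddBipartiteLabeling_le n m)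
    exact ⟨_, hlabel, rfl⟩
  · refine le_csInf ⟨_, _, hlabel, rfl⟩ ?_
    rintro _ ⟨f, hf, rfl⟩
    have := card_add_card_sub_one_le_two_mul_ncard_edgeMinus f hf
    rw [Fintype.card_fin, Fintype.card_fin] at this
    omega
end

section
/- A nonempty simple graph G (without isolated vertices) has difference index 1 if and only if G is a disjoint union of paths. -/
open SimpleGraph Function

/-! If an injective labelling gives every edge the same difference `d`, a vertex `v` has at most
the two neighbours labelled `f v ± d`, and the lowest vertex of a cycle would have two distinct
cycle neighbours both labelled `f u + d`. Conversely, a forest of maximum degree two is an induced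
subgraph of the integer line, even with any prescribed vertex `b` of degree at most one on top:
if `b` has a neighbour `c`, delete the edge `bc`, embed the rest with `c` on top, and label `b` by
`f c + 1`; an isolated `b` is simply moved above everything. -/

namespace SimpleGraph

variable {V : Type*} {G : SimpleGraph V}

section ConstantDifference

variable {f : V → ℤ} {d : ℤ}

theorem isAcyclic_of_injective_of_abs_sub_eq (hf : Injective f)
    (hd : ∀ u v, G.Adj u v → |f u - f v| = d) : G.IsAcyclic := by
  classical
  intro x c hc
  obtain ⟨u, hu, hmin⟩ := c.support.toFinset.exists_min_image f ⟨x, by simp⟩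
  rw [List.mem_toFinset] at hu
  obtain ⟨w₁, w₂, hne, hw⟩ := Set.ncard_eq_two.mp (hc.ncard_neighborSet_toSubgraph_eq_two hu)
  -- both cycle neighbours of the lowest vertex `u` lie above it, so both carry the label `f u + d`
  have above : ∀ w ∈ c.toSubgraph.neighborSet u, f w = f u + d := by
    intro w hw
    have hwc : w ∈ c.support := c.mem_verts_toSubgraph.mp (c.toSubgraph.edge_vert hw.symm)
    have hle := hmin w (List.mem_toFinset.mpr hwc)
    have h := hd u w (c.toSubgraph.adj_sub hw)
    rw [abs_sub_comm, abs_of_nonneg (by omega)] at h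
    omega
  exact hne (hf ((above w₁ (by simp [hw])).trans (above w₂ (by simp [hw])).symm))

theorem degree_le_two_of_injective_of_abs_sub_eq (hf : Injective f)
    (hd : ∀ u v, G.Adj u v → |f u - f v| = d) (v : V) [Fintype (G.neighborSet v)] :
    G.degree v ≤ 2 := by
  classical
  calc G.degree v = (G.neighborFinset v).card := (card_neighborFinset_eq_degree G v).symm
    _ ≤ ({f v - d, f v + d} : Finset ℤ).card := by
        refine Finset.card_le_card_of_injOn f (fun w hw => ?_) hf.injOn
        have h := hd v w ((mem_neighborFinset G v w).mp hw)
        rcases abs_choice (f v - f w) with h' | h' <;>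
          simp only [Finset.coe_insert, Finset.coe_singleton, Set.mem_insert_iff,
            Set.mem_singleton_iff] <;> omega
    _ ≤ 2 := Finset.card_le_two

end ConstantDifference

theorem ncard_image_edgeMinus_eq_one_iff {f : V → ℤ} (hG : G.edgeSet.Nonempty) :
    (edgeMinus f '' G.edgeSet).ncard = 1 ↔ ∃ d, ∀ u v, G.Adj u v → |f u - f v| = d := by
  rw [Set.ncard_eq_one]
  constructor
  · rintro ⟨d, hd⟩
    exact ⟨d, fun u v huv => (Set.mem_singleton_iff.mp (hd ▸ ⟨s(u, v), huv, rfl⟩) : _)⟩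
  · rintro ⟨d, hd⟩
    refine ⟨d, Set.eq_singleton_iff_nonempty_unique_mem.mpr ⟨hG.image _, ?_⟩⟩
    rintro _ ⟨e, he, rfl⟩
    induction e using Sym2.ind with
    | _ u v => exact hd u v he

theorem diffIndex_eq_one_iff [Finite V] (hG : G.edgeSet.Nonempty) :
    diffIndex G = 1 ↔ ∃ f : V → ℤ, Injective f ∧ ∃ d, ∀ u v, G.Adj u v → |f u - f v| = d := by
  set S := {k | ∃ f : V → ℤ, Injective f ∧ (edgeMinus f '' G.edgeSet).ncard = k}
  have hS : diffIndex G = sInf S := rfl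
  have h0 : 0 ∉ S := by
    rintro ⟨f, -, hf⟩
    exact ((hG.image _).ncard_pos (Set.toFinite _)).ne' hf
  have h1 : 1 ∈ S ↔ ∃ f : V → ℤ, Injective f ∧ ∃ d, ∀ u v, G.Adj u v → |f u - f v| = d := by
    simp only [S, Set.mem_ofPred_eq, ncard_image_edgeMinus_eq_one_iff hG]
  rw [hS, ← h1]
  refine ⟨fun h => h ▸ Nat.sInf_mem (Nat.nonempty_of_pos_sInf (by omega)), fun h => ?_⟩
  have := Nat.sInf_le h
  have : sInf S ≠ 0 := fun h' => h0 (h' ▸ Nat.sInf_mem ⟨1, h⟩)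
  omega

def IsLineEmbedding (G : SimpleGraph V) (f : V → ℤ) : Prop :=
  Injective f ∧ ∀ u v, G.Adj u v ↔ |f u - f v| = 1

theorem exists_isLineEmbedding_bot [Countable V] : ∃ f, (⊥ : SimpleGraph V).IsLineEmbedding f := by
  obtain ⟨g, hg⟩ := Countable.exists_injective_nat V
  refine ⟨fun v => 2 * (g v : ℤ), fun u v h => hg (by simpa using h), fun u v => ?_⟩
  simp only [bot_adj, false_iff, abs_eq zero_le_one]
  omega

section Update

variable [DecidableEq V] {H : SimpleGraph V} {f : V → ℤ} {b : V} {t : ℤ}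

theorem IsLineEmbedding.update_of_forall_lt (hf : H.IsLineEmbedding f) (ht : ∀ u ≠ b, f u < t)
    (hGH : ∀ u v, u ≠ b → v ≠ b → (G.Adj u v ↔ H.Adj u v))
    (hGb : ∀ v, G.Adj b v ↔ v ≠ b ∧ f v = t - 1) :
    G.IsLineEmbedding (update f b t) := by
  have adj_b : ∀ v, G.Adj b v ↔ |update f b t b - update f b t v| = 1 := by
    intro v
    rw [hGb, update_self]
    rcases eq_or_ne v b with rfl | hv
    · simp
    · have := ht v hv
      rw [update_of_ne hv, abs_of_pos (by omega)]
      constructor <;> intro h <;> [omega; exact ⟨hv, by omega⟩]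
  refine ⟨fun u v huv => ?_, fun u v => ?_⟩
  · by_cases hu : u = b <;> by_cases hv : v = b
    · rw [hu, hv]
    · rw [hu, update_self, update_of_ne hv] at huv
      exact absurd huv (ht v hv).ne'
    · rw [hv, update_self, update_of_ne hu] at huv
      exact absurd huv (ht u hu).ne
    · rw [update_of_ne hu, update_of_ne hv] at huv
      exact hf.1 huv
  · rcases eq_or_ne u b with rfl | hu
    · exact adj_b v
    rcases eq_or_ne v b with rfl | hv
    · rw [G.adj_comm, abs_sub_comm]
      exact adj_b u
    · rw [hGH u v hu hv, update_of_ne hu, update_of_ne hv]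
      exact hf.2 u v

theorem IsLineEmbedding.exists_forall_le_of_isolated [Finite V] (hf : G.IsLineEmbedding f)
    (hb : ∀ w, ¬G.Adj b w) : ∃ g, G.IsLineEmbedding g ∧ ∀ u, g u ≤ g b := by
  have : Nonempty V := ⟨b⟩
  obtain ⟨M, hM⟩ := Finite.exists_le f
  refine ⟨update f b (M + 2), hf.update_of_forall_lt (fun u _ => by linarith [hM u])
    (fun _ _ _ _ => Iff.rfl) (fun v => ?_), fun u => ?_⟩
  · simp only [hb v, false_iff, not_and]
    intro _ hv
    linarith [hM v]
  · rcases eq_or_ne u b with rfl | hu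
    · rfl
    · simp only [update_self, update_of_ne hu]
      linarith [hM u]

theorem IsLineEmbedding.update_of_deleteEdges {c : V}
    (hf : (G.deleteEdges {s(b, c)}).IsLineEmbedding f) (hbc : G.Adj b c)
    (hb : ∀ w, G.Adj b w → w = c) (hc : ∀ u, f u ≤ f c) :
    G.IsLineEmbedding (update f b (f c + 1)) ∧
      ∀ u, update f b (f c + 1) u ≤ update f b (f c + 1) b := by
  refine ⟨hf.update_of_forall_lt (fun u _ => by linarith [hc u]) (fun u v hu hv => ?_)
    (fun v => ?_), fun u => ?_⟩
  · simp [hu, hv]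
  · refine ⟨fun h => ?_, fun ⟨hvb, hv⟩ => ?_⟩
    · obtain rfl := hb v h
      exact ⟨hbc.ne.symm, by ring⟩
    · rw [hf.1 (show f v = f c by omega)]
      exact hbc
  · rcases eq_or_ne u b with rfl | hu
    · rfl
    · simp only [update_self, update_of_ne hu]
      linarith [hc u]

end Update

theorem IsAcyclic.exists_adj_forall_adj_eq [Finite V] (hG : G.IsAcyclic)
    (he : G.edgeSet.Nonempty) : ∃ b c, G.Adj b c ∧ ∀ w, G.Adj b w → w = c := by
  obtain ⟨e, he⟩ := he
  have : Nonempty V := ⟨e.out.1⟩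
  obtain ⟨u, v, p, hp, hmax⟩ := Walk.exists_isPath_forall_isPath_length_le_length G
  have hnil : ¬p.Nil := by
    induction e using Sym2.ind with
    | _ x y =>
      have hxy : G.Adj x y := he
      have h1 := hmax x y (Walk.cons hxy Walk.nil) (Walk.IsPath.nil.cons (by simpa using hxy.ne))
      rw [Walk.length_cons, Walk.length_nil] at h1
      exact fun h => by rw [Walk.length_eq_zero_iff.mpr h] at h1; omega
  -- `p` is a longest path, so every neighbour of its start already lies on it
  refine ⟨u, p.snd, p.adj_snd hnil, fun w hw => hG.eq_snd_of_adj_start hp hw ?_⟩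
  by_contra hwp
  have := hmax w v (Walk.cons hw.symm p) (hp.cons hwp)
  simp at this

theorem subsingleton_neighborSet_deleteEdges [Finite V] {b c : V} (hbc : G.Adj b c)
    (hc : (G.neighborSet c).ncard ≤ 2) :
    ((G.deleteEdges {s(b, c)}).neighborSet c).Subsingleton := by
  rw [← Set.ncard_le_one_iff_subsingleton]
  have hsub : (G.deleteEdges {s(b, c)}).neighborSet c ⊆ G.neighborSet c \ {b} := by
    intro w hw
    simp_all
  have := Set.ncard_le_ncard hsub
  have : (G.neighborSet c \ {b}).ncard + 1 = (G.neighborSet c).ncard :=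
    Set.ncard_sdiff_singleton_add_one hbc.symm
  omega

theorem IsAcyclic.exists_isLineEmbedding_forall_le [Finite V] (hG : G.IsAcyclic)
    (hdeg : ∀ v, (G.neighborSet v).ncard ≤ 2) {b : V}
    (hb : (G.neighborSet b).Subsingleton) :
    ∃ f, G.IsLineEmbedding f ∧ ∀ u, f u ≤ f b := by
  classical
  induction G using WellFoundedLT.induction generalizing b with
  | _ G ih =>
  have leaf : ∀ b c, G.Adj b c → (∀ w, G.Adj b w → w = c) →
      ∃ f, G.IsLineEmbedding f ∧ ∀ u, f u ≤ f b := by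
    intro b c hbc hb
    have hle : G.deleteEdges {s(b, c)} ≤ G := G.deleteEdges_le _
    have hlt : G.deleteEdges {s(b, c)} < G := hle.lt_of_ne fun h => by
      simpa [hbc] using congrArg (fun H : SimpleGraph V => H.Adj b c) h
    obtain ⟨f, hf, hfc⟩ : ∃ f, (G.deleteEdges {s(b, c)}).IsLineEmbedding f ∧ ∀ u, f u ≤ f c :=
      ih _ hlt (hG.anti hle)
        (fun v => (Set.ncard_le_ncard (neighborSet_mono hle v)).trans (hdeg v))
        (subsingleton_neighborSet_deleteEdges hbc (hdeg c))
    exact ⟨_, hf.update_of_deleteEdges hbc hb hfc⟩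
  rcases (G.neighborSet b).eq_empty_or_nonempty with hnb | ⟨c, hc⟩
  · obtain ⟨g, hg⟩ : ∃ g, G.IsLineEmbedding g := by
      rcases G.edgeSet.eq_empty_or_nonempty with he | he
      · rw [edgeSet_eq_empty.mp he]
        exact exists_isLineEmbedding_bot
      · obtain ⟨b', c', hbc', hb'⟩ := hG.exists_adj_forall_adj_eq he
        obtain ⟨g, hg, -⟩ := leaf b' c' hbc' hb'
        exact ⟨g, hg⟩
    exact hg.exists_forall_le_of_isolated (Set.eq_empty_iff_forall_notMem.mp hnb)
  · exact leaf b c hc fun w hw => hb hw hc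

end SimpleGraph

theorem stmt18_general {V : Type*} [Fintype V] (G : SimpleGraph V) [DecidableRel G.Adj]
    (hG : G.edgeSet.Nonempty) :
    diffIndex G = 1 ↔ G.IsAcyclic ∧ ∀ v, G.degree v ≤ 2 := by
  rw [diffIndex_eq_one_iff hG]
  constructor
  · rintro ⟨f, hf, d, hd⟩
    exact ⟨isAcyclic_of_injective_of_abs_sub_eq hf hd,
      fun v => degree_le_two_of_injective_of_abs_sub_eq hf hd v⟩
  · rintro ⟨hacyc, hdeg⟩
    obtain ⟨b, c, -, hb⟩ := hacyc.exists_adj_forall_adj_eq hG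
    obtain ⟨f, hf, -⟩ := hacyc.exists_isLineEmbedding_forall_le (b := b)
      (fun v => (Set.ncard_eq_toFinset_card' _).trans_le (hdeg v))
      fun w hw w' hw' => (hb w hw).trans (hb w' hw').symm
    exact ⟨f, hf.1, 1, fun u v huv => (hf.2 u v).mp huv⟩

theorem stmt18 {V : Type*} [Fintype V] (G : SimpleGraph V) [DecidableRel G.Adj]
    (hG : G.edgeSet.Nonempty) (hiso : ∀ v, ∃ w, G.Adj v w) :
    diffIndex G = 1 ↔ G.IsAcyclic ∧ ∀ v, G.degree v ≤ 2 :=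
  stmt18_general G hG
end
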